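/- arXiv:2506.22657 — 6 statements merged into one kernel-verified Lean document; each statement's English description precedes it below -/
import Mathlib

section
/- For every real p ≥ 1 and all i, j ∈ {1, …, m}, ( E[ |J^C_{(i,j)}|^p ] )^{1/p} ≤ ((max{2, p} − 1 + 1/√2)/√2) · h. (Inequality (177) of Lemma 6.11.) -/
/-!
By AM–GM, `|ab|^p ≤ (|a|^(2p) + |b|^(2p))/2`, so `E|J^C_(i,j)|^p` is at most `2^(-p) E|G|^(2p)`,
which by the absolute-moment formula of the centred Gaussian equals `h^p Γ(p + 1/2)/√π`.
It remains to show `Γ(p + 1/2) ≤ √π C_p^p` for the constant `C_p` of the statement. On `[1, 2]`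
convexity of `Γ` gives `Γ(p + 1/2) ≤ Γ(5/2) = 3√π/4`, and one application of `Γ(x + 1) = x Γ(x)`
carries this to `[2, 3]`. Beyond, the step `p ↦ p + 1` multiplies the left side by `p + 1/2`
and, by Bernoulli's inequality, the right side by at least `C_p + p/√2 ≥ p + 1/2`.
-/

open MeasureTheory ProbabilityTheory

open Real
open scoped NNReal

lemma rpow_mul_add_mul_le_mul_rpow_add {c d q : ℝ} (hc : 0 < c) (hd : 0 ≤ d) (hq : 1 ≤ q) :
    c ^ q * (c + q * d) ≤ c * (c + d) ^ q := by
  have hbern :=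
    one_add_mul_self_le_rpow_one_add (by linarith [div_nonneg hd hc.le] : -1 ≤ d / c) hq
  have hcd : c + d = c * (1 + d / c) := by field_simp
  rw [hcd, mul_rpow hc.le (by positivity)]
  calc c ^ q * (c + q * d) = c * c ^ q * (1 + q * (d / c)) := by field_simp
    _ ≤ c * (c ^ q * (1 + d / c) ^ q) := by
      rw [← mul_assoc]; gcongr

noncomputable def momentConst (p : ℝ) : ℝ := (max 2 p - 1 + 1 / √2) / √2

lemma momentConst_of_two_le {p : ℝ} (hp : 2 ≤ p) : momentConst p = (p - 1) / √2 + 1 / 2 := by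
  have hs : √2 * √2 = 2 := mul_self_sqrt zero_le_two
  rw [momentConst, max_eq_right hp, add_div, div_div, hs]

lemma one_le_momentConst (p : ℝ) : 1 ≤ momentConst p := by
  have hs : √2 * √2 = 2 := mul_self_sqrt zero_le_two
  have hinv : 1 / √2 = √2 / 2 := by rw [div_eq_div_iff (by positivity) two_ne_zero]; linarith
  rw [momentConst, le_div_iff₀ (by positivity), one_mul, hinv]
  nlinarith [le_max_left 2 p]

lemma Gamma_add_half_le_three_quarters_mul_sqrt_pi {q : ℝ} (h1 : 1 ≤ q) (h2 : q ≤ 2) :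
    Gamma (q + 1 / 2) ≤ 3 / 4 * √π := by
  have h32 : Gamma (3 / 2) = √π / 2 := by
    have := Gamma_nat_add_half 1
    norm_num at this
    exact this
  have h52 : Gamma (5 / 2) = 3 / 4 * √π := by
    have := Gamma_nat_add_half 2
    norm_num [Nat.doubleFactorial] at this
    linarith
  have := convexOn_Gamma.le_max_of_mem_Icc (x := 3 / 2) (y := 5 / 2) (z := q + 1 / 2)
    (by norm_num) (by norm_num) ⟨by linarith, by linarith⟩
  rwa [h32, h52, max_eq_right (by linarith [sqrt_nonneg π])] at this

lemma Gamma_add_half_le_of_le_two {q : ℝ} (h1 : 1 ≤ q) (h2 : q ≤ 2) :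
    Gamma (q + 1 / 2) ≤ √π * momentConst q ^ q :=
  calc Gamma (q + 1 / 2) ≤ 3 / 4 * √π := Gamma_add_half_le_three_quarters_mul_sqrt_pi h1 h2
    _ ≤ √π * 1 := by nlinarith [sqrt_nonneg π]
    _ ≤ √π * momentConst q ^ q := by
      gcongr; exact one_le_rpow (one_le_momentConst q) (by linarith)

lemma Gamma_add_one_add_half_le_of_le_two {q : ℝ} (h1 : 1 ≤ q) (h2 : q ≤ 2) :
    Gamma (q + 1 + 1 / 2) ≤ √π * momentConst (q + 1) ^ (q + 1) := by
  have hs : √2 * √2 = 2 := mul_self_sqrt zero_le_two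
  have hs1 : 7 / 5 ≤ √2 := by rw [le_sqrt (by norm_num) zero_le_two]; norm_num
  have hC : momentConst (q + 1) = q / √2 + 1 / 2 := by
    rw [momentConst_of_two_le (by linarith)]; ring
  have key : (q + 1 / 2) * (3 / 4) ≤ momentConst (q + 1) ^ (2 : ℝ) := by
    rw [rpow_two, hC, div_add' _ _ _ (by positivity), div_pow, le_div_iff₀ (by positivity)]
    nlinarith
  calc Gamma (q + 1 + 1 / 2) = (q + 1 / 2) * Gamma (q + 1 / 2) := by
        rw [add_right_comm, Gamma_add_one (by linarith)]
    _ ≤ (q + 1 / 2) * (3 / 4 * √π) := by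
      gcongr; exact Gamma_add_half_le_three_quarters_mul_sqrt_pi h1 h2
    _ ≤ √π * momentConst (q + 1) ^ (2 : ℝ) := by nlinarith [sqrt_nonneg π]
    _ ≤ √π * momentConst (q + 1) ^ (q + 1) := by
      gcongr
      · exact one_le_momentConst _
      · linarith

lemma Gamma_add_one_add_half_le_of_two_le {q : ℝ} (hq : 2 ≤ q)
    (h : Gamma (q + 1 / 2) ≤ √π * momentConst q ^ q) :
    Gamma (q + 1 + 1 / 2) ≤ √π * momentConst (q + 1) ^ (q + 1) := by
  have hs1 : √2 ≤ 3 / 2 := by rw [sqrt_le_left (by norm_num)]; norm_num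
  set c := momentConst q
  have hc : 0 < c := one_pos.trans_le (one_le_momentConst q)
  have hcq : c = (q - 1) / √2 + 1 / 2 := momentConst_of_two_le hq
  have hsucc : momentConst (q + 1) = c + 1 / √2 := by
    rw [hcq, momentConst_of_two_le (by linarith)]; ring
  have key : q + 1 / 2 ≤ c + q * (1 / √2) := by
    rw [hcq]
    have : q ≤ (2 * q - 1) / √2 := by rw [le_div_iff₀ (by positivity)]; nlinarith
    linarith [show (q - 1) / √2 + 1 / 2 + q * (1 / √2) = (2 * q - 1) / √2 + 1 / 2 by ring]
  calc Gamma (q + 1 + 1 / 2) = (q + 1 / 2) * Gamma (q + 1 / 2) := by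
        rw [add_right_comm, Gamma_add_one (by linarith)]
    _ ≤ (c + q * (1 / √2)) * (√π * c ^ q) := by gcongr
    _ = √π * (c ^ q * (c + q * (1 / √2))) := by ring
    _ ≤ √π * (c * (c + 1 / √2) ^ q) := mul_le_mul_of_nonneg_left
        (rpow_mul_add_mul_le_mul_rpow_add hc (by positivity) (by linarith)) (sqrt_nonneg π)
    _ ≤ √π * momentConst (q + 1) ^ (q + 1) := by
      rw [hsucc, rpow_add_one (by positivity), mul_comm c]
      gcongr
      linarith [one_div_nonneg.mpr (sqrt_nonneg 2)]

theorem Gamma_add_half_le {p : ℝ} (hp : 1 ≤ p) : Gamma (p + 1 / 2) ≤ √π * momentConst p ^ p := by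
  rcases le_total p 2 with hp2 | hp2
  · exact Gamma_add_half_le_of_le_two hp hp2
  set k := ⌊p - 1⌋₊
  have hk : 1 ≤ k := Nat.le_floor (by push_cast; linarith)
  have hkp : (k : ℝ) ≤ p - 1 := Nat.floor_le (by linarith)
  have hpk : p - 1 < k + 1 := Nat.lt_floor_add_one _
  have hq1 : 1 ≤ p - k := by linarith
  have hq2 : p - k ≤ 2 := by linarith
  have hind : ∀ n : ℕ, 1 ≤ n →
      Gamma (p - k + n + 1 / 2) ≤ √π * momentConst (p - k + n) ^ (p - k + n) := by
    intro n hn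
    induction n, hn using Nat.le_induction with
    | base => exact_mod_cast Gamma_add_one_add_half_le_of_le_two hq1 hq2
    | succ n hn ih =>
      push_cast
      rw [← add_assoc]
      exact Gamma_add_one_add_half_le_of_two_le
        (by linarith [show (1 : ℝ) ≤ n by exact_mod_cast hn]) ih
  simpa using hind k hk

lemma integral_abs_rpow_gaussianReal {v : ℝ≥0} (hv : v ≠ 0) {s : ℝ} (hs : -1 < s) :
    ∫ x, |x| ^ s ∂gaussianReal 0 v = (2 * v) ^ (s / 2) * Gamma ((s + 1) / 2) / √π := by
  have h2v : (0 : ℝ) < 2 * v := by positivity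
  rw [integral_gaussianReal_eq_integral_smul hv]
  simp only [gaussianPDFReal, sub_zero, smul_eq_mul]
  let f : ℝ → ℝ := fun t ↦ (√(2 * π * v))⁻¹ * (t ^ s * rexp (-(2 * v : ℝ)⁻¹ * t ^ (2 : ℝ)))
  have hf : ∀ x : ℝ, (√(2 * π * v))⁻¹ * rexp (-x ^ 2 / (2 * v)) * |x| ^ s = f |x| := by
    intro x
    simp only [f, rpow_two, sq_abs]
    ring_nf
  simp_rw [hf]
  rw [integral_comp_abs (f := f), integral_const_mul,
    integral_rpow_mul_exp_neg_mul_rpow two_pos hs (inv_pos.2 h2v), inv_rpow h2v.le,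
    ← rpow_neg h2v.le, show 2 * π * v = π * (2 * v) by ring, sqrt_mul pi_pos.le,
    sqrt_eq_rpow, show -(-(s + 1) / 2) = s / 2 + 1 / 2 by ring, rpow_add h2v]
  field_simp
  rw [sqrt_eq_rpow]

lemma integrable_abs_rpow_gaussianReal (m : ℝ) (v : ℝ≥0) {s : ℝ} (hs : 0 ≤ s) :
    Integrable (fun x ↦ |x| ^ s) (gaussianReal m v) := by
  simpa [coe_toNNReal _ hs] using
    (memLp_id_gaussianReal (μ := m) (v := v) s.toNNReal).integrable_norm_rpow'

lemma abs_mul_rpow_le_add (a b p : ℝ) : |a * b| ^ p ≤ (|a| ^ (2 * p) + |b| ^ (2 * p)) / 2 := by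
  have hsq (x : ℝ) : |x| ^ (2 * p) = (|x| ^ p) ^ 2 := by
    rw [mul_comm, rpow_mul (abs_nonneg x), rpow_two]
  rw [abs_mul, mul_rpow (abs_nonneg a) (abs_nonneg b), hsq, hsq]
  linarith [two_mul_le_add_sq (|a| ^ p) (|b| ^ p)]

section RandomVariables

variable {Ω : Type*} [MeasurableSpace Ω] {P : Measure Ω}

lemma integral_abs_mul_rpow_le {X Y : Ω → ℝ} {p : ℝ}
    (hX : Integrable (fun ω ↦ |X ω| ^ (2 * p)) P) (hY : Integrable (fun ω ↦ |Y ω| ^ (2 * p)) P) :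
    ∫ ω, |X ω * Y ω| ^ p ∂P ≤ ((∫ ω, |X ω| ^ (2 * p) ∂P) + ∫ ω, |Y ω| ^ (2 * p) ∂P) / 2 := by
  rw [← integral_add hX hY, ← integral_div]
  exact integral_mono_of_nonneg (.of_forall fun ω ↦ by positivity) ((hX.add hY).div_const 2)
    (.of_forall fun ω ↦ abs_mul_rpow_le_add _ _ _)

lemma ProbabilityTheory.HasLaw.integrable_abs_rpow {X : Ω → ℝ} {m : ℝ} {v : ℝ≥0}
    (hX : HasLaw X (gaussianReal m v) P) {s : ℝ} (hs : 0 ≤ s) :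
    Integrable (fun ω ↦ |X ω| ^ s) P := by
  have := integrable_abs_rpow_gaussianReal m v hs
  rwa [← hX.map_eq, integrable_map_measure (by fun_prop) hX.aemeasurable] at this

lemma ProbabilityTheory.HasLaw.integral_abs_rpow {X : Ω → ℝ} {v : ℝ≥0}
    (hX : HasLaw X (gaussianReal 0 v) P) (hv : v ≠ 0) {s : ℝ} (hs : -1 < s) :
    ∫ ω, |X ω| ^ s ∂P = (2 * v) ^ (s / 2) * Gamma ((s + 1) / 2) / √π := by
  rw [← integral_abs_rpow_gaussianReal hv hs]
  exact hX.integral_comp (measurable_id.abs.pow_const s).aestronglyMeasurable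

lemma integral_abs_mul_div_two_rpow_le {X Y : Ω → ℝ} {v : ℝ≥0} (hv : v ≠ 0)
    (hX : HasLaw X (gaussianReal 0 v) P) (hY : HasLaw Y (gaussianReal 0 v) P) {p : ℝ}
    (hp : 1 ≤ p) : ∫ ω, |X ω * Y ω / 2| ^ p ∂P ≤ (momentConst p * v) ^ p := by
  have hmoment {Z : Ω → ℝ} (hZ : HasLaw Z (gaussianReal 0 v) P) :
      ∫ ω, |Z ω| ^ (2 * p) ∂P = 2 ^ p * v ^ p * Gamma (p + 1 / 2) / √π := by
    rw [hZ.integral_abs_rpow hv (by linarith), mul_rpow zero_le_two v.coe_nonneg]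
    ring_nf
  calc ∫ ω, |X ω * Y ω / 2| ^ p ∂P = (∫ ω, |X ω * Y ω| ^ p ∂P) / 2 ^ p := by
        simp_rw [abs_div, abs_two, div_rpow (abs_nonneg _) zero_le_two]
        exact integral_div _ _
    _ ≤ ((∫ ω, |X ω| ^ (2 * p) ∂P) + ∫ ω, |Y ω| ^ (2 * p) ∂P) / 2 / 2 ^ p := by
        gcongr
        exact integral_abs_mul_rpow_le (hX.integrable_abs_rpow (by positivity))
          (hY.integrable_abs_rpow (by positivity))
    _ = v ^ p * (Gamma (p + 1 / 2) / √π) := by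
        rw [hmoment hX, hmoment hY]; field_simp; ring
    _ ≤ v ^ p * momentConst p ^ p := by
        gcongr
        rw [div_le_iff₀ (sqrt_pos.2 pi_pos), mul_comm]
        exact Gamma_add_half_le hp
    _ = (momentConst p * v) ^ p := by
        rw [mul_rpow (zero_le_one.trans (one_le_momentConst p)) v.coe_nonneg, mul_comm]

end RandomVariables

theorem stmt_7_general {Ω : Type*} [MeasurableSpace Ω] (μ : Measure Ω)
    (m : ℕ) (h : ℝ) (hh : 0 < h)
    (G : Fin m → Ω → ℝ)
    (hGlaw : ∀ k, Measure.map (G k) μ = gaussianReal 0 h.toNNReal)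
    (p : ℝ) (hp : 1 ≤ p) (i j : Fin m) :
    (∫ ω, |G i ω * G j ω / 2| ^ p ∂μ) ^ (1 / p)
      ≤ ((max 2 p - 1 + 1 / Real.sqrt 2) / Real.sqrt 2) * h := by
  have hv : h.toNNReal ≠ 0 := by simpa using hh
  have hlaw (k : Fin m) : HasLaw (G k) (gaussianReal 0 h.toNNReal) μ :=
    ⟨.of_map_ne_zero ((hGlaw k).symm ▸ IsProbabilityMeasure.ne_zero _), hGlaw k⟩
  have hbound := integral_abs_mul_div_two_rpow_le hv (hlaw i) (hlaw j) hp
  rw [coe_toNNReal _ hh.le] at hbound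
  calc (∫ ω, |G i ω * G j ω / 2| ^ p ∂μ) ^ (1 / p) ≤ ((momentConst p * h) ^ p) ^ (1 / p) :=
        rpow_le_rpow (integral_nonneg fun ω ↦ by positivity) hbound (by positivity)
    _ = momentConst p * h := by
        rw [one_div, rpow_rpow_inv (by nlinarith [one_le_momentConst p]) (by positivity)]

/-- Inequality (177) of Lemma 6.11: L^p bound for the commutative-noise random variables
`J^C_{(i,j)} = G_i G_j / 2` built from independent `N(0,h)` Gaussians. -/
theorem stmt_7 {Ω : Type*} [MeasurableSpace Ω] (μ : Measure Ω) [IsProbabilityMeasure μ]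
    (m : ℕ) (hm : 0 < m) (h : ℝ) (hh : 0 < h)
    (G : Fin m → Ω → ℝ) (hGmeas : ∀ k, Measurable (G k))
    (hGindep : iIndepFun G μ)
    (hGlaw : ∀ k, Measure.map (G k) μ = gaussianReal 0 h.toNNReal)
    (p : ℝ) (hp : 1 ≤ p) (i j : Fin m) :
    (∫ ω, |G i ω * G j ω / 2| ^ p ∂μ) ^ (1 / p)
      ≤ ((max 2 p - 1 + 1 / Real.sqrt 2) / Real.sqrt 2) * h :=
  stmt_7_general μ m h hh G hGlaw p hp i j
end

section
/- For all real p₁, p₂ ≥ 1 and all i, j, k ∈ {1, …, m}, E[ |G_k|^{p₁} · |J^C_{(i,j)}|^{p₂} ] ≤ (2p₁ − 1)^{p₁} · (2p₂ − 1 + 1/√2)^{p₂} · 2^{−p₂/2} · h^{p₁/2 + p₂}. (Inequality (178) of Lemma 6.11.) -/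
open MeasureTheory ProbabilityTheory Real Set
open scoped ENNReal NNReal

namespace Stmt8Aux

lemma integrable_comp_abs {f : ℝ → ℝ} (hf : IntegrableOn f (Set.Ioi (0:ℝ))) :
    Integrable (fun x => f |x|) := by
  have hIoi : IntegrableOn (fun x => f |x|) (Set.Ioi (0:ℝ)) := by
    refine hf.congr_fun (fun x hx => ?_) measurableSet_Ioi
    rw [abs_eq_self.mpr (le_of_lt hx)]
  have int_Iic : IntegrableOn (fun x ↦ f |x|) (Set.Iic 0) := by
    rw [← Measure.map_neg_eq_self (volume : Measure ℝ)]
    have m : MeasurableEmbedding fun x : ℝ => -x := (Homeomorph.neg ℝ).measurableEmbedding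
    rw [m.integrableOn_map_iff]
    simp_rw [Function.comp_def, abs_neg, neg_preimage, neg_Iic, neg_zero]
    exact Iff.mpr integrableOn_Ici_iff_integrableOn_Ioi hIoi
  have := int_Iic.union hIoi
  rwa [Set.Iic_union_Ioi, integrableOn_univ] at this

/-- normalized-in-`π` absolute moment of `gaussianReal 0 h`. -/
noncomputable def F (h q : ℝ) : ℝ := (2*h) ^ (q/2) * Real.Gamma ((q+1)/2) / Real.sqrt π

lemma F_pos {h q : ℝ} (hh : 0 < h) (hq : -1 < q) : 0 < F h q := by
  have h1 : 0 < (2*h) ^ (q/2) := Real.rpow_pos_of_pos (by linarith) _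
  have h2 : 0 < Real.Gamma ((q+1)/2) := Real.Gamma_pos_of_pos (by linarith)
  have h3 : 0 < Real.sqrt π := Real.sqrt_pos.mpr Real.pi_pos
  exact div_pos (mul_pos h1 h2) h3

lemma F_rec {h q : ℝ} (hh : 0 < h) (hq : 1 < q) : F h q = (q-1) * h * F h (q-2) := by
  have h2h : (0:ℝ) < 2*h := by linarith
  have e1 : (q+1)/2 = (q-1)/2 + 1 := by ring
  have e2 : Real.Gamma ((q+1)/2) = ((q-1)/2) * Real.Gamma ((q-1)/2) := by
    rw [e1, Real.Gamma_add_one (ne_of_gt (by linarith : (0:ℝ) < (q-1)/2))]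
  have e3 : (2*h) ^ (q/2) = (2*h) * (2*h) ^ ((q-2)/2) := by
    rw [show q/2 = 1 + (q-2)/2 by ring, Real.rpow_add h2h, Real.rpow_one]
  have e4 : (q-2+1)/2 = (q-1)/2 := by ring
  rw [F, F, e2, e3, e4]
  ring

lemma moment_eq {h q : ℝ} (hh : 0 < h) (hq : 0 ≤ q) :
    ∫⁻ x, ENNReal.ofReal (|x| ^ q) ∂(gaussianReal 0 h.toNNReal)
      = ENNReal.ofReal (F h q) := by
  have hv : h.toNNReal ≠ 0 := by
    simp only [ne_eq, Real.toNNReal_eq_zero, not_le]; exact hh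
  have hvr : ((h.toNNReal : ℝ≥0) : ℝ) = h := Real.coe_toNNReal _ hh.le
  have h2h : (0:ℝ) < 2*h := by linarith
  have hb : (0:ℝ) < (2*h)⁻¹ := by positivity
  have hmeas : Measurable fun x : ℝ => ENNReal.ofReal (|x| ^ q) :=
    ((Real.continuous_rpow_const hq).measurable.comp measurable_abs).ennreal_ofReal
  rw [gaussianReal_of_var_ne_zero 0 hv,
    lintegral_withDensity_eq_lintegral_mul _ (measurable_gaussianPDF 0 _) hmeas]
  have hpt : (gaussianPDF 0 h.toNNReal * fun x => ENNReal.ofReal (|x| ^ q))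
      = fun x => ENNReal.ofReal (gaussianPDFReal 0 h.toNNReal x * |x| ^ q) := by
    funext x
    simp [gaussianPDF, ← ENNReal.ofReal_mul (gaussianPDFReal_nonneg 0 _ x)]
  rw [hpt]
  have hfun : (fun x => gaussianPDFReal 0 h.toNNReal x * |x| ^ q)
      = fun x => (fun y => (Real.sqrt (2 * π * h))⁻¹ * (y ^ q * Real.exp (-(2*h)⁻¹ * y ^ 2))) |x| := by
    funext x
    have harg : -(x-0)^2/(2*h) = -(2*h)⁻¹ * |x|^2 := by rw [sq_abs]; ring
    simp only [gaussianPDFReal, hvr]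
    rw [harg]
    ring
  have hint : Integrable (fun x => gaussianPDFReal 0 h.toNNReal x * |x| ^ q) := by
    rw [hfun]
    exact integrable_comp_abs
      ((integrableOn_rpow_mul_exp_neg_mul_sq hb (by linarith : (-1:ℝ) < q)).const_mul _)
  rw [← MeasureTheory.ofReal_integral_eq_lintegral_ofReal hint
    (Filter.Eventually.of_forall fun x =>
      mul_nonneg (gaussianPDFReal_nonneg 0 _ x) (Real.rpow_nonneg (abs_nonneg x) q))]
  congr 1
  rw [hfun, integral_comp_abs
    (f := fun y => (Real.sqrt (2 * π * h))⁻¹ * (y ^ q * Real.exp (-(2*h)⁻¹ * y ^ 2))),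
    MeasureTheory.integral_const_mul]
  have h2 : ∫ x in Set.Ioi (0:ℝ), x ^ q * Real.exp (-(2*h)⁻¹ * x ^ 2)
      = ((2*h)⁻¹) ^ (-(q+1)/2) * (1/2) * Real.Gamma ((q+1)/2) := by
    rw [show (∫ x in Set.Ioi (0:ℝ), x ^ q * Real.exp (-(2*h)⁻¹ * x ^ 2))
        = ∫ x in Set.Ioi (0:ℝ), x ^ q * Real.exp (-(2*h)⁻¹ * x ^ (2:ℝ)) from
      setIntegral_congr_fun measurableSet_Ioi (fun x hx => by
        rw [← Real.rpow_natCast x 2]; norm_num)]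
    exact integral_rpow_mul_exp_neg_mul_rpow (by norm_num) (by linarith) hb
  rw [h2]
  have hbinv : ((2*h)⁻¹ : ℝ) ^ (-(q+1)/2) = (2*h) ^ ((q+1)/2) := by
    rw [Real.inv_rpow h2h.le, ← Real.rpow_neg h2h.le]
    congr 1; ring
  rw [hbinv, show (q+1)/2 = q/2 + 1/2 by ring, Real.rpow_add h2h]
  have hsq2h : (2*h) ^ ((1:ℝ)/2) = Real.sqrt (2*h) := (Real.sqrt_eq_rpow (2*h)).symm
  have hsqpi : Real.sqrt (2 * π * h) = Real.sqrt (2*h) * Real.sqrt π := by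
    rw [show 2 * π * h = (2*h) * π by ring, Real.sqrt_mul (by linarith)]
  rw [hsq2h, hsqpi, F]
  have hs1 : (0:ℝ) < Real.sqrt (2*h) := Real.sqrt_pos.mpr h2h
  have hs2 : (0:ℝ) < Real.sqrt π := Real.sqrt_pos.mpr Real.pi_pos
  field_simp

lemma lyap {h s s' : ℝ} (hh : 0 < h) (hs : 0 < s) (hss' : s ≤ s') :
    F h s ≤ (F h s') ^ (s/s') := by
  have hs' : 0 < s' := lt_of_lt_of_le hs hss'
  have hmom : ∀ u : ℝ, 0 ≤ u →
      ∫⁻ x, ‖x‖ₑ ^ u ∂(gaussianReal 0 h.toNNReal) = ENNReal.ofReal (F h u) := by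
    intro u hu
    rw [show (fun x : ℝ => ‖x‖ₑ ^ u) = fun x : ℝ => ENNReal.ofReal (|x| ^ u) by
      funext x
      rw [Real.enorm_eq_ofReal_abs, ← ENNReal.ofReal_rpow_of_nonneg (abs_nonneg x) hu]]
    exact moment_eq hh hu
  have hL := eLpNorm'_le_eLpNorm'_of_exponent_le hs hss' (gaussianReal 0 h.toNNReal)
    (aestronglyMeasurable_id : AEStronglyMeasurable (id : ℝ → ℝ) _)
  rw [eLpNorm', eLpNorm'] at hL
  simp only [id_eq] at hL
  rw [hmom s hs.le, hmom s' hs'.le] at hL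
  have h2 := ENNReal.rpow_le_rpow hL (le_of_lt hs)
  rw [← ENNReal.rpow_mul, ← ENNReal.rpow_mul, one_div_mul_cancel (ne_of_gt hs),
    ENNReal.rpow_one, show 1/s' * s = s/s' by field_simp] at h2
  rw [ENNReal.ofReal_rpow_of_nonneg (le_of_lt (F_pos hh (by linarith))) (div_nonneg hs.le hs'.le)] at h2
  exact (ENNReal.ofReal_le_ofReal_iff (Real.rpow_nonneg (F_pos hh (by linarith)).le _)).mp h2

lemma F_two {h : ℝ} (hh : 0 < h) : F h 2 = h := by
  have h32 : Real.Gamma ((2+1)/2) = (1/2) * Real.sqrt π := by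
    rw [show ((2:ℝ)+1)/2 = 1/2 + 1 by norm_num, Real.Gamma_add_one (by norm_num),
      Real.Gamma_one_half_eq]
  have hsp : Real.sqrt π ≠ 0 := ne_of_gt (Real.sqrt_pos.mpr Real.pi_pos)
  rw [F, h32, show (2:ℝ)/2 = 1 by norm_num, Real.rpow_one]
  field_simp

lemma bound1 {h q : ℝ} (hh : 0 < h) (hq : 2 ≤ q) : F h q ≤ ((q-1)*h) ^ (q/2) := by
  rcases eq_or_lt_of_le hq with heq | hlt
  · rw [← heq, F_two hh, show ((2:ℝ)-1)*h = h by ring, show (2:ℝ)/2 = 1 by norm_num,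
      Real.rpow_one]
  · have hq0 : q ≠ 0 := ne_of_gt (by linarith)
    have hA : 0 < F h q := F_pos hh (by linarith)
    have h4 : F h q ≤ (q-1)*h * (F h q) ^ ((q-2)/q) := by
      calc F h q = (q-1)*h*F h (q-2) := F_rec hh (by linarith)
        _ ≤ (q-1)*h*((F h q)^((q-2)/q)) := by
            apply mul_le_mul_of_nonneg_left
              (lyap hh (by linarith) (by linarith)) (mul_nonneg (by linarith) hh.le)
    have h6 : (F h q) ^ ((2:ℝ)/q) ≤ (q-1)*h := by
      have hD : 0 < (F h q) ^ ((q-2)/q) := Real.rpow_pos_of_pos hA _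
      have hsplit : (2:ℝ)/q = 1 - (q-2)/q := by
        field_simp
        ring
      rw [hsplit, Real.rpow_sub hA, Real.rpow_one, div_le_iff₀ hD]
      exact h4
    have hone : (2:ℝ)/q * (q/2) = 1 := by
      field_simp
    calc F h q = ((F h q) ^ ((2:ℝ)/q)) ^ (q/2) := by
          rw [← Real.rpow_mul hA.le, hone, Real.rpow_one]
      _ ≤ ((q-1)*h) ^ (q/2) := Real.rpow_le_rpow (Real.rpow_nonneg hA.le _) h6 (by linarith)

lemma step_ineq {q : ℝ} (hq : 6 ≤ q) :
    (q-1) * ((q-4+Real.sqrt 2)/Real.sqrt 2) ^ ((q-2)/2)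
      ≤ ((q-2+Real.sqrt 2)/Real.sqrt 2) ^ (q/2) := by
  set s := Real.sqrt 2 with hsdef
  have hs0 : 0 < s := Real.sqrt_pos.mpr (by norm_num)
  have hs2 : s^2 = 2 := Real.sq_sqrt (by norm_num)
  have hsu : s ≤ 3/2 := by nlinarith
  have hx0 : 0 < q-4+s := by linarith
  have hb1 : (0:ℝ) < (q-4+s)/s := div_pos hx0 hs0
  have hb2 : (0:ℝ) < (q-2+s)/s := div_pos (by linarith) hs0
  have hxdef : (q-2+s)/s = ((q-4+s)/s) * (1 + 2/(q-4+s)) := by field_simp; ring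
  have hsne : s ≠ 0 := hs0.ne'
  have hxne : q-4+s ≠ 0 := hx0.ne'
  have hbern : (1 + ((q-2)/2) * (2/(q-4+s))) ≤ (1 + 2/(q-4+s)) ^ ((q-2)/2) :=
    one_add_mul_self_le_rpow_one_add
      (by have h0 : (0:ℝ) ≤ 2/(q-4+s) := by positivity
          linarith) (by linarith)
  have e1 : ((q-2+s)/s) ^ (q/2)
      = ((q-2+s)/s) * (((q-4+s)/s) ^ ((q-2)/2) * (1 + 2/(q-4+s)) ^ ((q-2)/2)) := by
    rw [show q/2 = 1 + (q-2)/2 by ring, Real.rpow_add hb2, Real.rpow_one]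
    congr 1
    rw [hxdef, Real.mul_rpow hb1.le (by positivity)]
  have hfin : (q-1) ≤ ((q-2+s)/s) * (1 + ((q-2)/2)*(2/(q-4+s))) := by
    have he : ((q-2+s)/s) * (1 + ((q-2)/2)*(2/(q-4+s)))
        = (q-2+s)*(2*q-6+s) / (s*(q-4+s)) := by
      field_simp
      ring_nf
    rw [he, le_div_iff₀ (by positivity)]
    nlinarith [mul_nonneg (mul_nonneg (by linarith : (0:ℝ) ≤ q-2)
      (by linarith : (0:ℝ) ≤ 2-s)) (by linarith : (0:ℝ) ≤ q-6)]
  calc (q-1) * ((q-4+s)/s) ^ ((q-2)/2)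
      ≤ (((q-2+s)/s) * (1 + ((q-2)/2)*(2/(q-4+s)))) * ((q-4+s)/s) ^ ((q-2)/2) :=
        mul_le_mul_of_nonneg_right hfin (Real.rpow_nonneg hb1.le _)
    _ ≤ (((q-2+s)/s) * ((1 + 2/(q-4+s)) ^ ((q-2)/2))) * ((q-4+s)/s) ^ ((q-2)/2) := by
        apply mul_le_mul_of_nonneg_right _ (Real.rpow_nonneg hb1.le _)
        exact mul_le_mul_of_nonneg_left hbern hb2.le
    _ = ((q-2+s)/s) ^ (q/2) := by rw [e1]; ring

lemma F_five {h : ℝ} (hh : 0 < h) : F h 5 = (2*h) ^ ((5:ℝ)/2) * 2 / Real.sqrt π := by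
  have hg : Real.Gamma ((5+1)/2) = 2 := by
    rw [show ((5:ℝ)+1)/2 = ((2:ℕ):ℝ)+1 by norm_num, Real.Gamma_nat_eq_factorial]
    norm_num
  rw [F, hg]

lemma F_six {h : ℝ} (hh : 0 < h) : F h 6 = 15 * h^3 := by
  have hsp : Real.sqrt π ≠ 0 := ne_of_gt (Real.sqrt_pos.mpr Real.pi_pos)
  have g32 : Real.Gamma (3/2) = (1/2) * Real.sqrt π := by
    rw [show (3:ℝ)/2 = 1/2 + 1 by norm_num, Real.Gamma_add_one (by norm_num),
      Real.Gamma_one_half_eq]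
  have g52 : Real.Gamma (5/2) = (3/2) * ((1/2) * Real.sqrt π) := by
    rw [show (5:ℝ)/2 = 3/2 + 1 by norm_num, Real.Gamma_add_one (by norm_num), g32]
  have g72 : Real.Gamma ((6+1)/2) = (5/2) * ((3/2) * ((1/2) * Real.sqrt π)) := by
    rw [show ((6:ℝ)+1)/2 = 5/2 + 1 by norm_num, Real.Gamma_add_one (by norm_num), g52]
  rw [F, g72, show (6:ℝ)/2 = ((3:ℕ):ℝ) by norm_num, Real.rpow_natCast]
  field_simp
  ring

lemma key_base {h q : ℝ} (hh : 0 < h) (hq : 4 ≤ q) (hq6 : q ≤ 6) :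
    F h q ≤ ((q-2+Real.sqrt 2)/Real.sqrt 2 * h) ^ (q/2) := by
  set s := Real.sqrt 2 with hsdef
  have hs0 : 0 < s := Real.sqrt_pos.mpr (by norm_num)
  have hs2 : s^2 = 2 := Real.sq_sqrt (by norm_num)
  have hsu : s ≤ 3/2 := by nlinarith
  have hs1 : 1 ≤ s := by nlinarith
  have hs14 : 7/5 ≤ s := by nlinarith
  have hπ := Real.pi_gt_three
  have hmono : ∀ a, 4 ≤ a → a ≤ q → ((a-2+s)/s*h) ^ (q/2) ≤ ((q-2+s)/s*h) ^ (q/2) := by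
    intro a ha haq
    apply Real.rpow_le_rpow (mul_nonneg (div_nonneg (by linarith) hs0.le) hh.le)
      (mul_le_mul_of_nonneg_right ((div_le_div_iff_of_pos_right hs0).mpr (by linarith)) hh.le)
      (by linarith)
  rcases le_or_gt q 5 with h5 | h5
  · -- 4 ≤ q ≤ 5 : anchor at 5
    have hF5 : 0 ≤ F h 5 := (F_pos hh (by norm_num)).le
    have hb4 : (0:ℝ) ≤ (4-2+s)/s*h := mul_nonneg (div_nonneg (by linarith) hs0.le) hh.le
    have hL : F h 5 ≤ ((4-2+s)/s*h) ^ ((5:ℝ)/2) := by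
      have hbase : (4-2+s)/s = 1 + s := by
        field_simp
        linear_combination (-1) * hs2
      rw [F_five hh, hbase]
      set L := (2*h) ^ ((5:ℝ)/2) * 2 / Real.sqrt π with hLdef
      set R := ((1+s)*h) ^ ((5:ℝ)/2) with hRdef
      have hLpos : 0 ≤ L := by
        have hx : (0:ℝ) < Real.sqrt π := Real.sqrt_pos.mpr Real.pi_pos
        have hy : (0:ℝ) ≤ (2*h) ^ ((5:ℝ)/2) := Real.rpow_nonneg (by linarith) _
        positivity
      have hRpos : 0 ≤ R := Real.rpow_nonneg (mul_nonneg (by linarith) hh.le) _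
      have hsq : L^2 ≤ R^2 := by
        have hLsq : L^2 = (2*h)^(5:ℕ) * 4 / π := by
          rw [hLdef, div_pow, mul_pow, Real.sq_sqrt Real.pi_pos.le,
            ← Real.rpow_natCast ((2*h) ^ ((5:ℝ)/2)) 2, ← Real.rpow_mul (by linarith),
            show (5:ℝ)/2*((2:ℕ):ℝ) = ((5:ℕ):ℝ) by norm_num, Real.rpow_natCast]
          norm_num
        have hRsq : R^2 = ((1+s)*h)^(5:ℕ) := by
          rw [hRdef, ← Real.rpow_natCast (((1+s)*h) ^ ((5:ℝ)/2)) 2,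
            ← Real.rpow_mul (mul_nonneg (by linarith) hh.le),
            show (5:ℝ)/2*((2:ℕ):ℝ) = ((5:ℕ):ℝ) by norm_num, Real.rpow_natCast]
        rw [hLsq, hRsq, div_le_iff₀ Real.pi_pos]
        have hexp : ((1:ℝ)+s)^(5:ℕ) = 41 + 29*s := by linear_combination (s^3+5*s^2+12*s+20) * hs2
        have hgoal : ((2:ℝ)*h)^(5:ℕ)*4 = 128*h^5 := by ring
        have hR5 : (((1:ℝ)+s)*h)^(5:ℕ) = (41+29*s)*h^5 := by rw [mul_pow, hexp]
        rw [hgoal, hR5]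
        have h12 : ((12:ℝ)/5)^(5:ℕ) ≤ 41 + 29*s := by nlinarith
        have hh5 : (0:ℝ) < h^(5:ℕ) := pow_pos hh 5
        nlinarith [mul_le_mul_of_nonneg_right
          (mul_le_mul h12 (le_of_lt hπ) (by norm_num) (by linarith)) hh5.le]
      calc L = Real.sqrt (L^2) := (Real.sqrt_sq hLpos).symm
        _ ≤ Real.sqrt (R^2) := Real.sqrt_le_sqrt hsq
        _ = R := Real.sqrt_sq hRpos
    calc F h q ≤ (F h 5) ^ (q/5) := lyap hh (by linarith) (by linarith)
      _ ≤ (((4-2+s)/s*h) ^ ((5:ℝ)/2)) ^ (q/5) :=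
          Real.rpow_le_rpow hF5 hL (by linarith)
      _ = ((4-2+s)/s*h) ^ (q/2) := by
          rw [← Real.rpow_mul hb4, show (5:ℝ)/2*(q/5) = q/2 by ring]
      _ ≤ ((q-2+s)/s*h) ^ (q/2) := hmono 4 (by norm_num) hq
  · -- 5 < q ≤ 6 : anchor at 6
    have hF6 : 0 ≤ F h 6 := (F_pos hh (by norm_num)).le
    have hb5 : (0:ℝ) ≤ (5-2+s)/s*h := mul_nonneg (div_nonneg (by linarith) hs0.le) hh.le
    have hL : F h 6 ≤ ((5-2+s)/s*h) ^ ((6:ℝ)/2) := by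
      rw [F_six hh, show (6:ℝ)/2 = ((3:ℕ):ℝ) by norm_num, Real.rpow_natCast, mul_pow]
      have hbase : (3:ℝ) ≤ (5-2+s)/s := by
        rw [le_div_iff₀ hs0]; nlinarith
      have h27 : (27:ℝ) ≤ ((5-2+s)/s)^(3:ℕ) := by
        calc (27:ℝ) = 3^(3:ℕ) := by norm_num
          _ ≤ ((5-2+s)/s)^(3:ℕ) := pow_le_pow_left₀ (by norm_num) hbase 3
      nlinarith [pow_pos hh 3]
    calc F h q ≤ (F h 6) ^ (q/6) := lyap hh (by linarith) (by linarith)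
      _ ≤ (((5-2+s)/s*h) ^ ((6:ℝ)/2)) ^ (q/6) :=
          Real.rpow_le_rpow hF6 hL (by linarith)
      _ = ((5-2+s)/s*h) ^ (q/2) := by
          rw [← Real.rpow_mul hb5, show (6:ℝ)/2*(q/6) = q/2 by ring]
      _ ≤ ((q-2+s)/s*h) ^ (q/2) := hmono 5 (by norm_num) (by linarith)

lemma key {h q : ℝ} (hh : 0 < h) (hq : 4 ≤ q) :
    F h q ≤ ((q-2+Real.sqrt 2)/Real.sqrt 2 * h) ^ (q/2) := by
  have H : ∀ n : ℕ, ∀ r : ℝ, 4 ≤ r → r ≤ 6 + 2*n →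
      F h r ≤ ((r-2+Real.sqrt 2)/Real.sqrt 2 * h) ^ (r/2) := by
    intro n
    induction n with
    | zero => intro r h4 h6; exact key_base hh h4 (by norm_num at h6; linarith)
    | succ n ih =>
      intro r h4 h8
      rcases le_or_gt r (6 + 2*n) with hc | hc
      · exact ih r h4 hc
      · have hr6 : 6 ≤ r := by
          have : (0:ℝ) ≤ 2*n := by positivity
          linarith
        set s := Real.sqrt 2 with hsdef
        have hs0 : 0 < s := Real.sqrt_pos.mpr (by norm_num)
        have hih : F h (r-2) ≤ ((r-4+s)/s*h) ^ ((r-2)/2) := by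
          have := ih (r-2) (by linarith) (by push_cast at h8 ⊢; linarith)
          rw [show r-2-2 = r-4 by ring] at this
          exact this
        have hstep := step_ineq (q := r) hr6
        calc F h r = (r-1)*h*F h (r-2) := F_rec hh (by linarith)
          _ ≤ (r-1)*h*(((r-4+s)/s*h) ^ ((r-2)/2)) :=
              mul_le_mul_of_nonneg_left hih (mul_nonneg (by linarith) hh.le)
          _ = ((r-1) * ((r-4+s)/s)^((r-2)/2)) * h^(r/2) := by
              rw [Real.mul_rpow (div_nonneg (by linarith) hs0.le) hh.le,
                show r/2 = 1+(r-2)/2 by ring, Real.rpow_add hh, Real.rpow_one]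
              ring
          _ ≤ (((r-2+s)/s)^(r/2)) * h^(r/2) :=
              mul_le_mul_of_nonneg_right hstep (Real.rpow_nonneg hh.le _)
          _ = ((r-2+s)/s*h)^(r/2) := (Real.mul_rpow (div_nonneg (by linarith) hs0.le) hh.le).symm
  obtain ⟨n, hn⟩ : ∃ n : ℕ, q ≤ 6 + 2*n := by
    refine ⟨⌈q⌉₊, ?_⟩
    have := Nat.le_ceil q
    push_cast
    linarith [Nat.le_ceil q]
  exact H n q hq hn

lemma sq_ofReal (x r : ℝ) (hr : 0 ≤ r) :
    ENNReal.ofReal (|x| ^ r) ^ (2:ℝ) = ENNReal.ofReal (|x| ^ (2*r)) := by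
  rw [← ENNReal.ofReal_rpow_of_nonneg (abs_nonneg x) hr, ← ENNReal.rpow_mul,
    mul_comm r 2, ENNReal.ofReal_rpow_of_nonneg (abs_nonneg x) (by linarith)]

lemma marg2 {Ω : Type*} [MeasurableSpace Ω] (μ : Measure Ω) {h : ℝ} (hh : 0 < h)
    {X : Ω → ℝ} (hX : Measurable X) (hlaw : Measure.map X μ = gaussianReal 0 h.toNNReal)
    {r : ℝ} (hr : 0 ≤ r) {B : ℝ} (hB : F h (2*r) ≤ B) :
    (∫⁻ ω, ENNReal.ofReal (|X ω| ^ r) ^ (2:ℝ) ∂μ) ^ ((1:ℝ)/2)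
      ≤ ENNReal.ofReal B ^ ((1:ℝ)/2) := by
  have hmeas : Measurable fun x : ℝ => ENNReal.ofReal (|x| ^ (2*r)) :=
    ((Real.continuous_rpow_const (by linarith)).measurable.comp measurable_abs).ennreal_ofReal
  have h1 : ∫⁻ ω, ENNReal.ofReal (|X ω| ^ r) ^ (2:ℝ) ∂μ = ENNReal.ofReal (F h (2*r)) := by
    simp_rw [sq_ofReal _ r hr]
    rw [show (∫⁻ ω, ENNReal.ofReal (|X ω| ^ (2*r)) ∂μ)
        = ∫⁻ x, ENNReal.ofReal (|x| ^ (2*r)) ∂(Measure.map X μ) from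
      (lintegral_map hmeas hX).symm, hlaw]
    exact moment_eq hh (by linarith)
  rw [h1]
  exact ENNReal.rpow_le_rpow (ENNReal.ofReal_le_ofReal hB) (by norm_num)

lemma final_real {h p₁ p₂ : ℝ} (hh : 0 < h) (hp₁ : 1 ≤ p₁) (hp₂ : 1 ≤ p₂) :
    (((2*p₁-1)*h) ^ ((2*p₁)/2)) ^ ((1:ℝ)/2)
      * (((2:ℝ)^(-(2*p₂))) ^ ((1:ℝ)/2)
        * ((((4*p₂-2+Real.sqrt 2)/Real.sqrt 2)*h) ^ (2*p₂)) ^ ((1:ℝ)/2))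
      ≤ (2 * p₁ - 1) ^ p₁ * (2 * p₂ - 1 + 1 / Real.sqrt 2) ^ p₂ * (2 : ℝ) ^ (-(p₂ / 2))
          * h ^ (p₁ / 2 + p₂) := by
  set s := Real.sqrt 2 with hsdef
  have hs0 : 0 < s := Real.sqrt_pos.mpr (by norm_num)
  have hs2 : s^2 = 2 := Real.sq_sqrt (by norm_num)
  have hb0 : (0:ℝ) ≤ (4*p₂-2+s)/s := div_nonneg (by linarith) hs0.le
  have e1 : (((2*p₁-1)*h) ^ ((2*p₁)/2)) ^ ((1:ℝ)/2) = (2*p₁-1) ^ (p₁/2) * h ^ (p₁/2) := by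
    rw [← Real.rpow_mul (mul_nonneg (by linarith) hh.le),
      show (2*p₁)/2 * ((1:ℝ)/2) = p₁/2 by ring, Real.mul_rpow (by linarith) hh.le]
  have e2 : (((2:ℝ)^(-(2*p₂))) ^ ((1:ℝ)/2)) = (2:ℝ) ^ (-p₂) := by
    rw [← Real.rpow_mul (by norm_num), show (-(2*p₂)) * ((1:ℝ)/2) = -p₂ by ring]
  have e3 : ((((4*p₂-2+s)/s)*h) ^ (2*p₂)) ^ ((1:ℝ)/2)
      = ((4*p₂-2+s)/s) ^ p₂ * h ^ p₂ := by
    rw [← Real.rpow_mul (mul_nonneg hb0 hh.le),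
      show (2*p₂) * ((1:ℝ)/2) = p₂ by ring, Real.mul_rpow hb0 hh.le]
  rw [e1, e2, e3]
  have hy0 : (0:ℝ) < 2 * p₂ - 1 + 1 / s := by
    have : 0 < 1/s := by positivity
    linarith
  have eB : (2:ℝ) ^ (-p₂) * ((4*p₂-2+s)/s) ^ p₂
      = (2 * p₂ - 1 + 1 / s) ^ p₂ * (2:ℝ) ^ (-(p₂/2)) := by
    have c1 : (2:ℝ) ^ (-p₂) = ((2:ℝ)⁻¹) ^ p₂ := by
      rw [← Real.rpow_neg_one (2:ℝ), ← Real.rpow_mul (by norm_num)]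
      norm_num
    have hs2' : s ^ (2:ℝ) = 2 := by
      rw [show (2:ℝ) = ((2:ℕ):ℝ) by norm_num, Real.rpow_natCast]
      exact hs2
    have c2 : (2:ℝ) ^ (-(p₂/2)) = (s⁻¹) ^ p₂ := by
      calc (2:ℝ) ^ (-(p₂/2)) = (s ^ (2:ℝ)) ^ (-(p₂/2)) := by rw [hs2']
        _ = s ^ ((2:ℝ) * (-(p₂/2))) := (Real.rpow_mul hs0.le 2 (-(p₂/2))).symm
        _ = s ^ ((-1:ℝ) * p₂) := by ring_nf
        _ = (s ^ (-1:ℝ)) ^ p₂ := Real.rpow_mul hs0.le (-1) p₂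
        _ = (s⁻¹) ^ p₂ := by rw [Real.rpow_neg_one]
    have hbase : (2:ℝ)⁻¹ * ((4*p₂-2+s)/s) = (2 * p₂ - 1 + 1 / s) * s⁻¹ := by
      field_simp
      linear_combination hs2
    rw [c1, c2, ← Real.mul_rpow (by norm_num) hb0, ← Real.mul_rpow hy0.le (by positivity),
      hbase]
  have hA : (2*p₁-1) ^ (p₁/2) ≤ (2*p₁-1) ^ p₁ :=
    Real.rpow_le_rpow_of_exponent_le (by linarith) (by linarith)
  have hhpow : h ^ (p₁/2) * h ^ p₂ = h ^ (p₁/2+p₂) := (Real.rpow_add hh _ _).symm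
  calc (2*p₁-1) ^ (p₁/2) * h ^ (p₁/2) * ((2:ℝ) ^ (-p₂) * (((4*p₂-2+s)/s) ^ p₂ * h ^ p₂))
      = (2*p₁-1) ^ (p₁/2) * (((2:ℝ) ^ (-p₂) * ((4*p₂-2+s)/s) ^ p₂) * (h ^ (p₁/2) * h ^ p₂)) := by
        ring
    _ = (2*p₁-1) ^ (p₁/2) * (((2 * p₂ - 1 + 1 / s) ^ p₂ * (2:ℝ) ^ (-(p₂/2))) * h ^ (p₁/2+p₂)) := by
        rw [eB, hhpow]
    _ ≤ (2*p₁-1) ^ p₁ * (((2 * p₂ - 1 + 1 / s) ^ p₂ * (2:ℝ) ^ (-(p₂/2))) * h ^ (p₁/2+p₂)) := by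
        apply mul_le_mul_of_nonneg_right hA
        exact mul_nonneg (mul_nonneg (Real.rpow_nonneg hy0.le _)
          (Real.rpow_nonneg (by norm_num) _)) (Real.rpow_nonneg hh.le _)
    _ = (2 * p₁ - 1) ^ p₁ * (2 * p₂ - 1 + 1 / s) ^ p₂ * (2 : ℝ) ^ (-(p₂ / 2))
          * h ^ (p₁ / 2 + p₂) := by ring

end Stmt8Aux

open Stmt8Aux

/-- Inequality (178) of Lemma 6.11: mixed moment bound for a Wiener increment and the
commutative-noise random variables `J^C_{(i,j)} = G_i G_j / 2`. -/
theorem stmt_8 {Ω : Type*} [MeasurableSpace Ω] (μ : Measure Ω) [IsProbabilityMeasure μ]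
    (m : ℕ) (hm : 0 < m) (h : ℝ) (hh : 0 < h)
    (G : Fin m → Ω → ℝ) (hGmeas : ∀ k, Measurable (G k))
    (hGindep : iIndepFun G μ)
    (hGlaw : ∀ k, Measure.map (G k) μ = gaussianReal 0 h.toNNReal)
    (p₁ p₂ : ℝ) (hp₁ : 1 ≤ p₁) (hp₂ : 1 ≤ p₂) (i j k : Fin m) :
    ∫ ω, |G k ω| ^ p₁ * |G i ω * G j ω / 2| ^ p₂ ∂μ
      ≤ (2 * p₁ - 1) ^ p₁ * (2 * p₂ - 1 + 1 / Real.sqrt 2) ^ p₂ * (2 : ℝ) ^ (-(p₂ / 2))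
          * h ^ (p₁ / 2 + p₂) := by
  have hp₁0 : (0:ℝ) ≤ p₁ := by linarith
  have hp₂0 : (0:ℝ) ≤ p₂ := by linarith
  have hmA : Measurable fun ω => ENNReal.ofReal (|G k ω| ^ p₁) :=
    ((Real.continuous_rpow_const hp₁0).measurable.comp
      (measurable_abs.comp (hGmeas k))).ennreal_ofReal
  have hmJ : Measurable fun ω => G i ω * G j ω / 2 := ((hGmeas i).mul (hGmeas j)).div_const 2
  have hmB : Measurable fun ω => ENNReal.ofReal (|G i ω * G j ω / 2| ^ p₂) :=
    ((Real.continuous_rpow_const hp₂0).measurable.comp (measurable_abs.comp hmJ)).ennreal_ofReal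
  have hfmeas : ∀ l : Fin m, Measurable fun ω => ENNReal.ofReal (|G l ω| ^ (2*p₂)) := fun l =>
    ((Real.continuous_rpow_const (by linarith)).measurable.comp
      (measurable_abs.comp (hGmeas l))).ennreal_ofReal
  have hconj : Real.HolderConjugate 2 2 := Real.HolderConjugate.two_two
  have hs0 : 0 < Real.sqrt 2 := Real.sqrt_pos.mpr (by norm_num)
  set BA := ((2*p₁-1)*h) ^ ((2*p₁)/2) with hBAdef
  set BB := (((4*p₂-2+Real.sqrt 2)/Real.sqrt 2)*h) ^ (2*p₂) with hBBdef
  set c := (2:ℝ)^(-(2*p₂)) with hcdef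
  have hBA0 : 0 ≤ BA := Real.rpow_nonneg (mul_nonneg (by linarith) hh.le) _
  have hBBpos : 0 < BB :=
    Real.rpow_pos_of_pos (mul_pos (div_pos (by linarith) hs0) hh) _
  have hc0 : (0:ℝ) ≤ c := Real.rpow_nonneg (by norm_num) _
  have hKA : (∫⁻ ω, ENNReal.ofReal (|G k ω| ^ p₁) ^ (2:ℝ) ∂μ) ^ ((1:ℝ)/2)
      ≤ ENNReal.ofReal BA ^ ((1:ℝ)/2) :=
    marg2 μ hh (hGmeas k) (hGlaw k) hp₁0 (bound1 hh (by linarith))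
  have hKl : ∀ l : Fin m, (∫⁻ ω, ENNReal.ofReal (|G l ω| ^ (2*p₂)) ^ (2:ℝ) ∂μ) ^ ((1:ℝ)/2)
      ≤ ENNReal.ofReal BB ^ ((1:ℝ)/2) := by
    intro l
    apply marg2 μ hh (hGmeas l) (hGlaw l) (by linarith)
    have hk := key hh (show (4:ℝ) ≤ 2*(2*p₂) by linarith)
    rw [show 2*(2*p₂)-2 = 4*p₂-2 by ring, show (2*(2*p₂))/2 = 2*p₂ by ring] at hk
    exact hk
  have hnonneg : 0 ≤ᵐ[μ] fun ω => |G k ω| ^ p₁ * |G i ω * G j ω / 2| ^ p₂ :=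
    Filter.Eventually.of_forall fun ω =>
      mul_nonneg (Real.rpow_nonneg (abs_nonneg _) _) (Real.rpow_nonneg (abs_nonneg _) _)
  have hsm : AEStronglyMeasurable (fun ω => |G k ω| ^ p₁ * |G i ω * G j ω / 2| ^ p₂) μ :=
    (((Real.continuous_rpow_const hp₁0).measurable.comp (measurable_abs.comp (hGmeas k))).mul
      ((Real.continuous_rpow_const hp₂0).measurable.comp
        (measurable_abs.comp hmJ))).aestronglyMeasurable
  rw [integral_eq_lintegral_of_nonneg_ae hnonneg hsm]
  have hsplit : ∀ ω : Ω, ENNReal.ofReal (|G k ω| ^ p₁ * |G i ω * G j ω / 2| ^ p₂)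
      = ENNReal.ofReal (|G k ω| ^ p₁) * ENNReal.ofReal (|G i ω * G j ω / 2| ^ p₂) := fun ω =>
    ENNReal.ofReal_mul (Real.rpow_nonneg (abs_nonneg _) _)
  have hH1 := ENNReal.lintegral_mul_le_Lp_mul_Lq μ hconj hmA.aemeasurable hmB.aemeasurable
  simp only [Pi.mul_apply] at hH1
  have habs : ∀ ω : Ω, ENNReal.ofReal (|G i ω * G j ω / 2| ^ p₂) ^ (2:ℝ)
      = ENNReal.ofReal c
        * (ENNReal.ofReal (|G i ω| ^ (2*p₂)) * ENNReal.ofReal (|G j ω| ^ (2*p₂))) := by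
    intro ω
    rw [sq_ofReal _ _ hp₂0]
    have e : |G i ω * G j ω / 2| ^ (2*p₂)
        = c * (|G i ω| ^ (2*p₂) * |G j ω| ^ (2*p₂)) := by
      rw [hcdef, abs_div, abs_mul, abs_two,
        Real.div_rpow (mul_nonneg (abs_nonneg _) (abs_nonneg _)) (by norm_num),
        Real.mul_rpow (abs_nonneg _) (abs_nonneg _), Real.rpow_neg (by norm_num)]
      ring
    rw [e, ENNReal.ofReal_mul hc0, ENNReal.ofReal_mul (Real.rpow_nonneg (abs_nonneg _) _)]
  have hH2 := ENNReal.lintegral_mul_le_Lp_mul_Lq μ hconj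
    (hfmeas i).aemeasurable (hfmeas j).aemeasurable
  simp only [Pi.mul_apply] at hH2
  have hBBmul : ENNReal.ofReal BB ^ ((1:ℝ)/2) * ENNReal.ofReal BB ^ ((1:ℝ)/2)
      = ENNReal.ofReal BB := by
    rw [← ENNReal.rpow_add _ _ (by simp [hBBpos.not_ge]) ENNReal.ofReal_ne_top]
    norm_num
  have hIB : (∫⁻ ω, ENNReal.ofReal (|G i ω * G j ω / 2| ^ p₂) ^ (2:ℝ) ∂μ) ^ ((1:ℝ)/2)
      ≤ ENNReal.ofReal c ^ ((1:ℝ)/2) * ENNReal.ofReal BB ^ ((1:ℝ)/2) := by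
    have h1 : ∫⁻ ω, ENNReal.ofReal (|G i ω * G j ω / 2| ^ p₂) ^ (2:ℝ) ∂μ
        = ENNReal.ofReal c
          * ∫⁻ ω, ENNReal.ofReal (|G i ω| ^ (2*p₂)) * ENNReal.ofReal (|G j ω| ^ (2*p₂)) ∂μ := by
      simp_rw [habs]
      exact lintegral_const_mul _ ((hfmeas i).mul (hfmeas j))
    have h2 : ∫⁻ ω, ENNReal.ofReal (|G i ω| ^ (2*p₂)) * ENNReal.ofReal (|G j ω| ^ (2*p₂)) ∂μ
        ≤ ENNReal.ofReal BB :=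
      le_trans hH2 (le_of_le_of_eq (mul_le_mul' (hKl i) (hKl j)) hBBmul)
    calc (∫⁻ ω, ENNReal.ofReal (|G i ω * G j ω / 2| ^ p₂) ^ (2:ℝ) ∂μ) ^ ((1:ℝ)/2)
        ≤ (ENNReal.ofReal c * ENNReal.ofReal BB) ^ ((1:ℝ)/2) := by
          apply ENNReal.rpow_le_rpow _ (by norm_num)
          rw [h1]
          exact mul_le_mul' le_rfl h2
      _ = ENNReal.ofReal c ^ ((1:ℝ)/2) * ENNReal.ofReal BB ^ ((1:ℝ)/2) :=
          ENNReal.mul_rpow_of_nonneg _ _ (by norm_num)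
  have hT : ∫⁻ ω, ENNReal.ofReal (|G k ω| ^ p₁ * |G i ω * G j ω / 2| ^ p₂) ∂μ
      ≤ ENNReal.ofReal (BA ^ ((1:ℝ)/2) * (c ^ ((1:ℝ)/2) * BB ^ ((1:ℝ)/2))) := by
    calc ∫⁻ ω, ENNReal.ofReal (|G k ω| ^ p₁ * |G i ω * G j ω / 2| ^ p₂) ∂μ
        = ∫⁻ ω, ENNReal.ofReal (|G k ω| ^ p₁) * ENNReal.ofReal (|G i ω * G j ω / 2| ^ p₂) ∂μ := by
          simp_rw [hsplit]
      _ ≤ (∫⁻ ω, ENNReal.ofReal (|G k ω| ^ p₁) ^ (2:ℝ) ∂μ) ^ ((1:ℝ)/2)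
          * (∫⁻ ω, ENNReal.ofReal (|G i ω * G j ω / 2| ^ p₂) ^ (2:ℝ) ∂μ) ^ ((1:ℝ)/2) := hH1
      _ ≤ ENNReal.ofReal BA ^ ((1:ℝ)/2)
          * (ENNReal.ofReal c ^ ((1:ℝ)/2) * ENNReal.ofReal BB ^ ((1:ℝ)/2)) :=
          mul_le_mul' hKA hIB
      _ = ENNReal.ofReal (BA ^ ((1:ℝ)/2) * (c ^ ((1:ℝ)/2) * BB ^ ((1:ℝ)/2))) := by
          rw [ENNReal.ofReal_rpow_of_nonneg hBA0 (by norm_num),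
            ENNReal.ofReal_rpow_of_nonneg hc0 (by norm_num),
            ENNReal.ofReal_rpow_of_nonneg hBBpos.le (by norm_num),
            ← ENNReal.ofReal_mul (Real.rpow_nonneg hc0 _),
            ← ENNReal.ofReal_mul (Real.rpow_nonneg hBA0 _)]
  have hD0 : 0 ≤ BA ^ ((1:ℝ)/2) * (c ^ ((1:ℝ)/2) * BB ^ ((1:ℝ)/2)) :=
    mul_nonneg (Real.rpow_nonneg hBA0 _)
      (mul_nonneg (Real.rpow_nonneg hc0 _) (Real.rpow_nonneg hBBpos.le _))
  calc (∫⁻ ω, ENNReal.ofReal (|G k ω| ^ p₁ * |G i ω * G j ω / 2| ^ p₂) ∂μ).toReal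
      ≤ (ENNReal.ofReal (BA ^ ((1:ℝ)/2) * (c ^ ((1:ℝ)/2) * BB ^ ((1:ℝ)/2)))).toReal :=
        ENNReal.toReal_mono ENNReal.ofReal_ne_top hT
    _ = BA ^ ((1:ℝ)/2) * (c ^ ((1:ℝ)/2) * BB ^ ((1:ℝ)/2)) := ENNReal.toReal_ofReal hD0
    _ ≤ (2 * p₁ - 1) ^ p₁ * (2 * p₂ - 1 + 1 / Real.sqrt 2) ^ p₂ * (2 : ℝ) ^ (-(p₂ / 2))
          * h ^ (p₁ / 2 + p₂) := final_real hh hp₁ hp₂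
end

section
/- For every real p ≥ 2 and every h₀ with 0 < h₀ < 1/(s·c·c₃), there exists a constant c₆ > 0, depending only on p, s, c, c₃ and h₀, such that: for every probability space, every drift function a, every matrix A⁽⁰⁾ and vector c⁽⁰⁾ with entries of absolute value at most c₃, every h ∈ (0, h₀], every t ∈ ℝ, every random vector Z : Ω → ℝ^d with E‖Z‖^p < ∞, and every family of measurable random vectors H⁽⁰⁾₁, …, H⁽⁰⁾_s that almost surely form drift stage values with data (Z, t, h): E[ max_{1≤i≤s} ‖H⁽⁰⁾_i − Z‖^p ] ≤ c₆ · (1 + E‖Z‖^p) · h^p. (Lemma 6.6.) -/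
open MeasureTheory ProbabilityTheory

/-!
Let `M` be the largest stage increment `‖H⁽⁰⁾ᵢ - Z‖`. By the linear growth of the drift, every
stage satisfies `‖H⁽⁰⁾ᵢ‖ ≤ ‖Z‖ + M`, so the stage equations give `M ≤ h B (1 + ‖Z‖ + M)` with
`B = s c c₃`. Since `h B ≤ h₀ B < 1`, the term `h B M` can be absorbed into the left-hand side:
`M ≤ h K (1 + ‖Z‖)` with `K = B / (1 - h₀ B)`, pathwise and uniformly in `h ∈ (0, h₀]`.
Raising to the power `p` with `(1 + x)ᵖ ≤ 2ᵖ⁻¹ (1 + xᵖ)` and integrating gives the moment bound.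
-/

lemma Real.one_add_rpow_le {x p : ℝ} (hx : 0 ≤ x) (hp : 1 ≤ p) :
    (1 + x) ^ p ≤ 2 ^ (p - 1) * (1 + x ^ p) := by
  have := NNReal.rpow_add_le_mul_rpow_add_rpow 1 ⟨x, hx⟩ hp
  rw [NNReal.one_rpow] at this
  exact_mod_cast this

lemma rpow_le_of_le_mul_one_add {y x h K p : ℝ} (hy : 0 ≤ y) (hx : 0 ≤ x) (hh : 0 ≤ h)
    (hK : 0 ≤ K) (hp : 1 ≤ p) (hle : y ≤ h * K * (1 + x)) :
    y ^ p ≤ 2 ^ (p - 1) * K ^ p * h ^ p * (1 + x ^ p) := by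
  calc y ^ p ≤ (h * K * (1 + x)) ^ p := Real.rpow_le_rpow hy hle (by linarith)
    _ = h ^ p * K ^ p * (1 + x) ^ p := by
        rw [Real.mul_rpow (by positivity) (by positivity), Real.mul_rpow hh hK]
    _ ≤ h ^ p * K ^ p * (2 ^ (p - 1) * (1 + x ^ p)) := by
        gcongr
        exact Real.one_add_rpow_le hx hp
    _ = 2 ^ (p - 1) * K ^ p * h ^ p * (1 + x ^ p) := by ring

lemma le_mul_div_of_le_mul_add_self {M X h h₀ B : ℝ} (hM : 0 ≤ M) (hB : 0 ≤ B) (hh : h ≤ h₀)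
    (hh₀B : h₀ * B < 1) (hle : M ≤ h * B * (X + M)) :
    M ≤ h * (B / (1 - h₀ * B)) * X := by
  have habsorb : M * (1 - h₀ * B) ≤ h * B * X := by
    nlinarith [mul_le_mul_of_nonneg_right hh (mul_nonneg hB hM)]
  rw [mul_div_assoc', div_mul_eq_mul_div, le_div_iff₀ (by linarith)]
  linarith

lemma integral_le_mul_one_add_integral {Ω : Type*} [MeasurableSpace Ω] {μ : Measure Ω}
    [IsProbabilityMeasure μ] {f g : Ω → ℝ} {C : ℝ} (hf : 0 ≤ f) (hg : Integrable g μ)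
    (hfg : ∀ᵐ ω ∂μ, f ω ≤ C * (1 + g ω)) :
    ∫ ω, f ω ∂μ ≤ C * (1 + ∫ ω, g ω ∂μ) := by
  calc ∫ ω, f ω ∂μ ≤ ∫ ω, C * (1 + g ω) ∂μ :=
        integral_mono_of_nonneg (.of_forall hf) (((integrable_const 1).add hg).const_mul C) hfg
    _ = C * (1 + ∫ ω, g ω ∂μ) := by
        rw [integral_const_mul, integral_add (integrable_const 1) hg, integral_const,
          probReal_univ, one_smul]

section StageEquation

variable {ι E : Type*} [Fintype ι] [NormedAddCommGroup E] [NormedSpace ℝ E]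
  {f : ι → E → E} {A : ι → ι → ℝ} {c c₃ h : ℝ} {Z : E} {H : ι → E}

lemma norm_stage_sub_le_of_forall_le (hf : ∀ j x, ‖f j x‖ ≤ c * (1 + ‖x‖))
    (hA : ∀ i j, |A i j| ≤ c₃) (hh : 0 ≤ h) (hH : ∀ i, H i = Z + h • ∑ j, A i j • f j (H j))
    {M : ℝ} (hM : ∀ j, ‖H j - Z‖ ≤ M) (i : ι) :
    ‖H i - Z‖ ≤ h * (Fintype.card ι * c * c₃) * (1 + ‖Z‖ + M) := by
  have hc : 0 ≤ c := by simpa using (norm_nonneg _).trans (hf i 0)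
  have hterm : ∀ j, ‖A i j • f j (H j)‖ ≤ c₃ * (c * (1 + ‖Z‖ + M)) := fun j => by
    have hHj : ‖H j‖ ≤ ‖Z‖ + M := by linarith [norm_sub_norm_le (H j) Z, hM j]
    rw [norm_smul, Real.norm_eq_abs]
    exact mul_le_mul (hA i j) ((hf j _).trans (mul_le_mul_of_nonneg_left (by linarith) hc))
      (norm_nonneg _) ((abs_nonneg _).trans (hA i j))
  calc ‖H i - Z‖ = h * ‖∑ j, A i j • f j (H j)‖ := by
        rw [hH i, add_sub_cancel_left, norm_smul, Real.norm_of_nonneg hh]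
    _ ≤ h * ∑ _j : ι, c₃ * (c * (1 + ‖Z‖ + M)) :=
        mul_le_mul_of_nonneg_left
          ((norm_sum_le _ _).trans (Finset.sum_le_sum fun j _ => hterm j)) hh
    _ = h * (Fintype.card ι * c * c₃) * (1 + ‖Z‖ + M) := by
        rw [Finset.sum_const, Finset.card_univ, nsmul_eq_mul]; ring

lemma norm_stage_sub_le (hf : ∀ j x, ‖f j x‖ ≤ c * (1 + ‖x‖)) (hA : ∀ i j, |A i j| ≤ c₃)
    (hh : 0 ≤ h) {h₀ : ℝ} (hhh₀ : h ≤ h₀) (hh₀ : h₀ * (Fintype.card ι * c * c₃) < 1)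
    (hH : ∀ i, H i = Z + h • ∑ j, A i j • f j (H j)) (i : ι) :
    ‖H i - Z‖ ≤
      h * (Fintype.card ι * c * c₃ / (1 - h₀ * (Fintype.card ι * c * c₃))) * (1 + ‖Z‖) := by
  have : Nonempty ι := ⟨i⟩
  have hc : 0 ≤ c := by simpa using (norm_nonneg _).trans (hf i 0)
  have hc₃ : 0 ≤ c₃ := (abs_nonneg _).trans (hA i i)
  have hbdd : BddAbove (Set.range fun j => ‖H j - Z‖) := (Set.finite_range _).bddAbove
  set M := ⨆ j, ‖H j - Z‖
  have hM : ∀ j, ‖H j - Z‖ ≤ M := fun j => le_ciSup hbdd j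
  have hself : M ≤ h * (Fintype.card ι * c * c₃) * (1 + ‖Z‖ + M) :=
    ciSup_le (norm_stage_sub_le_of_forall_le hf hA hh hH hM)
  exact (hM i).trans
    (le_mul_div_of_le_mul_add_self ((norm_nonneg _).trans (hM i)) (by positivity) hhh₀ hh₀ hself)

end StageEquation

theorem stmt_11_general (s : ℕ) (hs : 0 < s) (c c₃ : ℝ) (hc : 0 < c) (hc₃ : 0 < c₃)
    (p : ℝ) (hp : 2 ≤ p)
    (h₀ : ℝ) (hh₀' : h₀ < 1 / ((s : ℝ) * c * c₃)) :
    ∃ c₆ > (0 : ℝ),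
      ∀ (d : ℕ) (Ω : Type) [MeasurableSpace Ω] (μ : Measure Ω) [IsProbabilityMeasure μ]
        (a : ℝ → EuclideanSpace ℝ (Fin d) → EuclideanSpace ℝ (Fin d)),
        (∀ t x, ‖a t x‖ ≤ c * (1 + ‖x‖)) →
        ∀ (A0 : Fin s → Fin s → ℝ) (c0 : Fin s → ℝ),
          (∀ i j, |A0 i j| ≤ c₃) → (∀ j, |c0 j| ≤ c₃) →
        ∀ (h : ℝ), 0 < h → h ≤ h₀ →
        ∀ (t : ℝ) (Z : Ω → EuclideanSpace ℝ (Fin d)), Measurable Z →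
          Integrable (fun ω => ‖Z ω‖ ^ p) μ →
        ∀ (H0 : Fin s → Ω → EuclideanSpace ℝ (Fin d)),
          (∀ i, Measurable (H0 i)) →
          (∀ᵐ ω ∂μ, ∀ i, H0 i ω = Z ω + h • ∑ j, A0 i j • a (t + c0 j * h) (H0 j ω)) →
          ∫ ω, (⨆ i : Fin s, ‖H0 i ω - Z ω‖ ^ p) ∂μ
            ≤ c₆ * (1 + ∫ ω, ‖Z ω‖ ^ p ∂μ) * h ^ p := by
  set B : ℝ := s * c * c₃
  have hB : 0 < B := by positivity
  have hh₀B : h₀ * B < 1 := by rwa [lt_div_iff₀ hB] at hh₀'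
  set K := B / (1 - h₀ * B)
  have hK : 0 < K := div_pos hB (by linarith)
  refine ⟨2 ^ (p - 1) * K ^ p, by positivity, ?_⟩
  intro d Ω _ μ _ a ha A0 c0 hA0 _ h hh hhh₀ t Z _ hZ H0 _ hH0
  have hmax : ∀ᵐ ω ∂μ, ⨆ i, ‖H0 i ω - Z ω‖ ^ p ≤
      2 ^ (p - 1) * K ^ p * h ^ p * (1 + ‖Z ω‖ ^ p) := by
    filter_upwards [hH0] with ω hω
    refine Real.iSup_le (fun i => rpow_le_of_le_mul_one_add (norm_nonneg _) (norm_nonneg _)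
      hh.le hK.le (by linarith) ?_) (by positivity)
    have := norm_stage_sub_le (f := fun j => a (t + c0 j * h)) (fun _ _ => ha _ _) hA0 hh.le
      hhh₀ (by rwa [Fintype.card_fin]) hω i
    rwa [Fintype.card_fin] at this
  calc ∫ ω, (⨆ i, ‖H0 i ω - Z ω‖ ^ p) ∂μ
      ≤ 2 ^ (p - 1) * K ^ p * h ^ p * (1 + ∫ ω, ‖Z ω‖ ^ p ∂μ) :=
        integral_le_mul_one_add_integral
          (fun ω => Real.iSup_nonneg fun i => by positivity) hZ hmax
    _ = 2 ^ (p - 1) * K ^ p * (1 + ∫ ω, ‖Z ω‖ ^ p ∂μ) * h ^ p := by ring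

/-- Lemma 6.6: uniform moment bound for the increments of the drift stages of the SRK method,
with a constant depending only on `p`, `s`, `c`, `c₃` and `h₀`. -/
theorem stmt_11 (s : ℕ) (hs : 0 < s) (c c₃ : ℝ) (hc : 0 < c) (hc₃ : 0 < c₃)
    (p : ℝ) (hp : 2 ≤ p)
    (h₀ : ℝ) (hh₀ : 0 < h₀) (hh₀' : h₀ < 1 / ((s : ℝ) * c * c₃)) :
    ∃ c₆ > (0 : ℝ),
      ∀ (d : ℕ) (Ω : Type) [MeasurableSpace Ω] (μ : Measure Ω) [IsProbabilityMeasure μ]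
        (a : ℝ → EuclideanSpace ℝ (Fin d) → EuclideanSpace ℝ (Fin d)),
        (∀ t x, ‖a t x‖ ≤ c * (1 + ‖x‖)) →
        ∀ (A0 : Fin s → Fin s → ℝ) (c0 : Fin s → ℝ),
          (∀ i j, |A0 i j| ≤ c₃) → (∀ j, |c0 j| ≤ c₃) →
        ∀ (h : ℝ), 0 < h → h ≤ h₀ →
        ∀ (t : ℝ) (Z : Ω → EuclideanSpace ℝ (Fin d)), Measurable Z →
          Integrable (fun ω => ‖Z ω‖ ^ p) μ →
        ∀ (H0 : Fin s → Ω → EuclideanSpace ℝ (Fin d)),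
          (∀ i, Measurable (H0 i)) →
          (∀ᵐ ω ∂μ, ∀ i, H0 i ω = Z ω + h • ∑ j, A0 i j • a (t + c0 j * h) (H0 j ω)) →
          ∫ ω, (⨆ i : Fin s, ‖H0 i ω - Z ω‖ ^ p) ∂μ
            ≤ c₆ * (1 + ∫ ω, ‖Z ω‖ ^ p ∂μ) * h ^ p :=
  stmt_11_general s hs c c₃ hc hc₃ p hp h₀ hh₀'
end

section
/- If 0 < h < 1/(s·c·c₃), then for every t ∈ ℝ, every Z ∈ ℝ^d and every family of drift stage values H⁽⁰⁾₁, …, H⁽⁰⁾_s with data (Z, t, h), one has max_{1≤i≤s} ‖H⁽⁰⁾_i‖ ≤ (‖Z‖ + s·c₃·c·h) / (1 − s·c₃·c·h). (Estimate (41) for the possibly implicitly defined drift stages of the SRK method.) -/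
/-!
Let `M` be the largest of the stage norms `‖H⁽⁰⁾_i‖`. The linear growth of the drift and the bounds
on the coefficients give `‖H⁽⁰⁾_i‖ ≤ ‖Z‖ + q (1 + M)` for every `i`, with `q = s c₃ c h`; taking
`i` to be a maximizing index yields `M ≤ ‖Z‖ + q (1 + M)`, and `q < 1` lets us solve for `M`.
-/

open Finset

theorem norm_sum_smul_le_of_le {ι E : Type*} [SeminormedAddCommGroup E] [NormedSpace ℝ E]
    (s : Finset ι) {A : ι → ℝ} {v : ι → E} {α K : ℝ}
    (hA : ∀ j, |A j| ≤ α) (hv : ∀ j, ‖v j‖ ≤ K) :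
    ‖∑ j ∈ s, A j • v j‖ ≤ #s * (α * K) := by
  calc ‖∑ j ∈ s, A j • v j‖ ≤ ∑ _j ∈ s, α * K := norm_sum_le_of_le s fun j _ => by
        rw [norm_smul, Real.norm_eq_abs]
        exact mul_le_mul (hA j) (hv j) (norm_nonneg _) ((abs_nonneg _).trans (hA j))
    _ = #s * (α * K) := by rw [sum_const, nsmul_eq_mul]

theorem Finite.le_div_one_sub_of_forall_le_add_mul {ι : Type*} [Finite ι] {r : ι → ℝ} {b q : ℝ}
    (hq : q < 1) (hr : ∀ M, (∀ j, r j ≤ M) → ∀ i, r i ≤ b + q * (1 + M)) (i : ι) :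
    r i ≤ (b + q) / (1 - q) := by
  have : Nonempty ι := ⟨i⟩
  obtain ⟨i₀, hi₀⟩ := Finite.exists_max r
  have hself : r i₀ ≤ b + q * (1 + r i₀) := hr (r i₀) hi₀ i₀
  rw [le_div_iff₀ (sub_pos.mpr hq)]
  nlinarith [hi₀ i]

theorem stmt_13_general (s d : ℕ) (c c₃ : ℝ) (hc : 0 < c) (hc₃ : 0 < c₃)
    (a : ℝ → EuclideanSpace ℝ (Fin d) → EuclideanSpace ℝ (Fin d))
    (ha : ∀ t x, ‖a t x‖ ≤ c * (1 + ‖x‖))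
    (A0 : Fin s → Fin s → ℝ) (hA0 : ∀ i j, |A0 i j| ≤ c₃)
    (c0 : Fin s → ℝ)
    (h : ℝ) (hh : 0 < h) (hh' : h < 1 / ((s : ℝ) * c * c₃))
    (t : ℝ) (Z : EuclideanSpace ℝ (Fin d))
    (H0 : Fin s → EuclideanSpace ℝ (Fin d))
    (hH0 : ∀ i, H0 i = Z + h • ∑ j, A0 i j • a (t + c0 j * h) (H0 j)) :
    ∀ i, ‖H0 i‖ ≤ (‖Z‖ + (s : ℝ) * c₃ * c * h) / (1 - (s : ℝ) * c₃ * c * h) := by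
  intro i
  have hs : (0 : ℝ) < s := Nat.cast_pos.mpr i.pos
  have hq : (s : ℝ) * c₃ * c * h < 1 := by
    rw [lt_div_iff₀ (by positivity)] at hh'
    linarith
  refine Finite.le_div_one_sub_of_forall_le_add_mul (r := fun j => ‖H0 j‖) hq (fun M hM j => ?_) i
  have hdrift : ∀ k, ‖a (t + c0 k * h) (H0 k)‖ ≤ c * (1 + M) := fun k =>
    (ha _ _).trans (by have := hM k; gcongr)
  calc ‖H0 j‖ ≤ ‖Z‖ + h * ‖∑ k, A0 j k • a (t + c0 k * h) (H0 k)‖ := by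
        rw [hH0 j]
        exact (norm_add_le _ _).trans_eq (by rw [norm_smul, Real.norm_of_nonneg hh.le])
    _ ≤ ‖Z‖ + h * (s * (c₃ * (c * (1 + M)))) := by
        gcongr
        simpa using norm_sum_smul_le_of_le univ (hA0 j) hdrift
    _ = ‖Z‖ + s * c₃ * c * h * (1 + M) := by ring

/-- Estimate (41): bound on the (possibly implicitly defined) drift stages of the SRK method. -/
theorem stmt_13 (s d : ℕ) (hs : 0 < s) (hd : 0 < d) (c c₃ : ℝ) (hc : 0 < c) (hc₃ : 0 < c₃)
    (a : ℝ → EuclideanSpace ℝ (Fin d) → EuclideanSpace ℝ (Fin d))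
    (ha : ∀ t x, ‖a t x‖ ≤ c * (1 + ‖x‖))
    (A0 : Fin s → Fin s → ℝ) (hA0 : ∀ i j, |A0 i j| ≤ c₃)
    (c0 : Fin s → ℝ) (hc0 : ∀ j, |c0 j| ≤ c₃)
    (h : ℝ) (hh : 0 < h) (hh' : h < 1 / ((s : ℝ) * c * c₃))
    (t : ℝ) (Z : EuclideanSpace ℝ (Fin d))
    (H0 : Fin s → EuclideanSpace ℝ (Fin d))
    (hH0 : ∀ i, H0 i = Z + h • ∑ j, A0 i j • a (t + c0 j * h) (H0 j)) :
    ∀ i, ‖H0 i‖ ≤ (‖Z‖ + (s : ℝ) * c₃ * c * h) / (1 - (s : ℝ) * c₃ * c * h) :=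
  stmt_13_general s d c c₃ hc hc₃ a ha A0 hA0 c0 h hh hh' t Z H0 hH0
end

section
/- Let A⁽¹⁾ ∈ ℝ^{s×s} also have all entries of absolute value at most c₃, and for drift stage values H⁽⁰⁾₁, …, H⁽⁰⁾_s with data (Z, t, h) define the first diffusion stage Ĥ := Z + h ∑_{j=1}^{s} A⁽¹⁾_{1j} a(t + c⁽⁰⁾_j h, H⁽⁰⁾_j). If 0 < h < 1/(s·c·c₃), then ‖Ĥ‖ ≤ (‖Z‖ + s·c₃·c·h)/(1 − s·c₃·c·h) and ‖Ĥ − Z‖ ≤ s·c₃·c·(1 + ‖Z‖)·h/(1 − s·c₃·c·h). (Estimates (42) and (47) for the first diffusion stage H⁽ᵏ⁾₁ of the SRK method, which is the same vector for every k.) -/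
/-!
Let `M` be the largest norm among the drift stage values and `q = s c₃ c h`. Linear growth of the
drift bounds every increment `h ∑ⱼ Bⱼ a(·, H⁽⁰⁾ⱼ)` with coefficients `|Bⱼ| ≤ c₃` by `q (1 + M)`.
Applied to the maximising stage this gives `M ≤ ‖Z‖ + q (1 + M)`, i.e. `1 + M ≤ (1 + ‖Z‖)/(1 - q)`,
and applied to the diffusion coefficients `A⁽¹⁾₁ⱼ` it gives both estimates.
-/

section StageBounds

variable {ι T E : Type*} [SeminormedAddCommGroup E]

theorem norm_le_mul_one_add_of_linear_growth {a : T → E → E} {c R : ℝ}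
    (ha : ∀ t x, ‖a t x‖ ≤ c * (1 + ‖x‖)) (t : T) {x : E} (hx : ‖x‖ ≤ R) :
    ‖a t x‖ ≤ c * (1 + R) := by
  have hc : 0 ≤ c := by simpa using (norm_nonneg _).trans (ha t 0)
  exact (ha t x).trans (by gcongr)

variable [Fintype ι] [NormedSpace ℝ E]

theorem norm_smul_sum_smul_le {B : ι → ℝ} {f : ι → E} {β K h : ℝ}
    (hB : ∀ j, |B j| ≤ β) (hf : ∀ j, ‖f j‖ ≤ K) (hh : 0 ≤ h) :
    ‖h • ∑ j, B j • f j‖ ≤ Fintype.card ι * β * K * h := by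
  have hterm : ∀ j ∈ Finset.univ, ‖B j • f j‖ ≤ β * K := fun j _ => by
    rw [norm_smul, Real.norm_eq_abs]
    exact mul_le_mul (hB j) (hf j) (norm_nonneg _) ((abs_nonneg _).trans (hB j))
  calc ‖h • ∑ j, B j • f j‖ = h * ‖∑ j, B j • f j‖ := by
        rw [norm_smul, Real.norm_of_nonneg hh]
    _ ≤ h * (Fintype.card ι * (β * K)) := by
        gcongr
        simpa using (norm_sum_le _ _).trans (Finset.sum_le_card_nsmul _ _ _ hterm)
    _ = Fintype.card ι * β * K * h := by ring

variable {a : T → E → E} {c c₃ h : ℝ} {A : ι → ι → ℝ} {τ : ι → T} {Z : E} {H : ι → E}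

theorem one_add_norm_stage_le [Nonempty ι]
    (ha : ∀ t x, ‖a t x‖ ≤ c * (1 + ‖x‖)) (hA : ∀ i j, |A i j| ≤ c₃) (hh : 0 ≤ h)
    (hq : Fintype.card ι * c₃ * c * h < 1)
    (hH : ∀ i, H i = Z + h • ∑ j, A i j • a (τ j) (H j)) (j : ι) :
    1 + ‖H j‖ ≤ (1 + ‖Z‖) / (1 - Fintype.card ι * c₃ * c * h) := by
  obtain ⟨i, hi⟩ := Finite.exists_max fun j => ‖H j‖
  have hself : ‖H i‖ ≤ ‖Z‖ + Fintype.card ι * c₃ * c * h * (1 + ‖H i‖) := by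
    have hinc := norm_smul_sum_smul_le (hA i)
      (fun j => norm_le_mul_one_add_of_linear_growth ha (τ j) (hi j)) hh
    calc ‖H i‖ ≤ ‖Z‖ + ‖h • ∑ j, A i j • a (τ j) (H j)‖ := by
          rw [hH i]; exact norm_add_le _ _
      _ ≤ _ := by linarith
  rw [le_div_iff₀ (by linarith)]
  nlinarith [hi j]

theorem norm_smul_sum_smul_drift_stage_le [Nonempty ι] {B : ι → ℝ}
    (ha : ∀ t x, ‖a t x‖ ≤ c * (1 + ‖x‖)) (hA : ∀ i j, |A i j| ≤ c₃) (hB : ∀ j, |B j| ≤ c₃)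
    (hh : 0 ≤ h) (hq : Fintype.card ι * c₃ * c * h < 1)
    (hH : ∀ i, H i = Z + h • ∑ j, A i j • a (τ j) (H j)) :
    ‖h • ∑ j, B j • a (τ j) (H j)‖ ≤
      Fintype.card ι * c₃ * c * (1 + ‖Z‖) * h / (1 - Fintype.card ι * c₃ * c * h) := by
  have hstage (j : ι) : ‖H j‖ ≤ (1 + ‖Z‖) / (1 - Fintype.card ι * c₃ * c * h) - 1 := by
    linarith [one_add_norm_stage_le ha hA hh hq hH j]
  have hinc := norm_smul_sum_smul_le hB
    (fun j => norm_le_mul_one_add_of_linear_growth ha (τ j) (hstage j)) hh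
  calc _ ≤ _ := hinc
    _ = _ := by ring

end StageBounds

theorem stmt_15_general (s d : ℕ) (hs : 0 < s) (c c₃ : ℝ)
    (a : ℝ → EuclideanSpace ℝ (Fin d) → EuclideanSpace ℝ (Fin d))
    (ha : ∀ t x, ‖a t x‖ ≤ c * (1 + ‖x‖))
    (A0 A1 : Fin s → Fin s → ℝ) (hA0 : ∀ i j, |A0 i j| ≤ c₃) (hA1 : ∀ i j, |A1 i j| ≤ c₃)
    (c0 : Fin s → ℝ)
    (h : ℝ) (hh : 0 < h) (hh' : h < 1 / ((s : ℝ) * c * c₃))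
    (t : ℝ) (Z : EuclideanSpace ℝ (Fin d))
    (H0 : Fin s → EuclideanSpace ℝ (Fin d))
    (hH0 : ∀ i, H0 i = Z + h • ∑ j, A0 i j • a (t + c0 j * h) (H0 j))
    (Hhat : EuclideanSpace ℝ (Fin d))
    (hHhat : Hhat = Z + h • ∑ j, A1 ⟨0, hs⟩ j • a (t + c0 j * h) (H0 j)) :
    ‖Hhat‖ ≤ (‖Z‖ + (s : ℝ) * c₃ * c * h) / (1 - (s : ℝ) * c₃ * c * h) ∧
    ‖Hhat - Z‖ ≤ (s : ℝ) * c₃ * c * (1 + ‖Z‖) * h / (1 - (s : ℝ) * c₃ * c * h) := by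
  have : Nonempty (Fin s) := ⟨⟨0, hs⟩⟩
  have hq : (s : ℝ) * c₃ * c * h < 1 := by
    have hpos : 0 < (s : ℝ) * c * c₃ := one_div_pos.mp (hh.trans hh')
    rw [lt_div_iff₀ hpos] at hh'
    linarith
  have hinc := norm_smul_sum_smul_drift_stage_le (B := A1 ⟨0, hs⟩) ha hA0 (hA1 _) hh.le
    (by rwa [Fintype.card_fin]) hH0
  rw [Fintype.card_fin, ← add_sub_cancel_left Z (h • _), ← hHhat] at hinc
  refine ⟨?_, hinc⟩
  calc ‖Hhat‖ ≤ ‖Z‖ + ‖Hhat - Z‖ := norm_le_insert' _ _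
    _ ≤ ‖Z‖ + (s : ℝ) * c₃ * c * (1 + ‖Z‖) * h / (1 - (s : ℝ) * c₃ * c * h) := by gcongr
    _ = (‖Z‖ + (s : ℝ) * c₃ * c * h) / (1 - (s : ℝ) * c₃ * c * h) := by
        field_simp [(sub_pos.mpr hq).ne']
        ring

/-- Estimates (42) and (47): bounds on the first diffusion stage `H⁽ᵏ⁾₁` of the SRK method
(which is the same vector for every `k`). -/
theorem stmt_15 (s d : ℕ) (hs : 0 < s) (hd : 0 < d) (c c₃ : ℝ) (hc : 0 < c) (hc₃ : 0 < c₃)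
    (a : ℝ → EuclideanSpace ℝ (Fin d) → EuclideanSpace ℝ (Fin d))
    (ha : ∀ t x, ‖a t x‖ ≤ c * (1 + ‖x‖))
    (A0 A1 : Fin s → Fin s → ℝ) (hA0 : ∀ i j, |A0 i j| ≤ c₃) (hA1 : ∀ i j, |A1 i j| ≤ c₃)
    (c0 : Fin s → ℝ) (hc0 : ∀ j, |c0 j| ≤ c₃)
    (h : ℝ) (hh : 0 < h) (hh' : h < 1 / ((s : ℝ) * c * c₃))
    (t : ℝ) (Z : EuclideanSpace ℝ (Fin d))
    (H0 : Fin s → EuclideanSpace ℝ (Fin d))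
    (hH0 : ∀ i, H0 i = Z + h • ∑ j, A0 i j • a (t + c0 j * h) (H0 j))
    (Hhat : EuclideanSpace ℝ (Fin d))
    (hHhat : Hhat = Z + h • ∑ j, A1 ⟨0, hs⟩ j • a (t + c0 j * h) (H0 j)) :
    ‖Hhat‖ ≤ (‖Z‖ + (s : ℝ) * c₃ * c * h) / (1 - (s : ℝ) * c₃ * c * h) ∧
    ‖Hhat - Z‖ ≤ (s : ℝ) * c₃ * c * (1 + ‖Z‖) * h / (1 - (s : ℝ) * c₃ * c * h) :=
  stmt_15_general s d hs c c₃ a ha A0 A1 hA0 hA1 c0 h hh hh' t Z H0 hH0 Hhat hHhat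
end

section
/- If 0 < h < 1/(s·c·c₃), then for every t ∈ ℝ, every Z ∈ ℝ^d, all real numbers ξ_{r,k} (r, k = 1, …, m) with S := ∑_{r,k=1}^{m} |ξ_{r,k}|, every family of drift stage values H⁽⁰⁾₁, …, H⁽⁰⁾_s with data (Z, t, h) and the corresponding diffusion stage values H⁽ᵏ⁾_i, one has for every i = 1, …, s: max_{1≤k≤m} ‖H⁽ᵏ⁾_i‖ ≤ ( (‖Z‖ + s·c₃·c·h)/(1 − s·c₃·c·h) + s·c₃·c·S ) · ∑_{j=0}^{i−1} (c₃·c·s)^j · S^j. (Estimate (45) for the diffusion stages of the SRK method.) -/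
/-!
The drift stages form an implicit system: at a stage of maximal norm `M`, linear growth of the
drift gives `M ≤ ‖Z‖ + θ (1 + M)` with `θ = s c₃ c h < 1`, hence `M ≤ D := (‖Z‖ + θ) / (1 - θ)`,
and the deterministic part of every diffusion stage is then bounded by `‖Z‖ + θ (1 + D) = D`.
Since `B⁽¹⁾` is strictly lower triangular, the diffusion stages are explicit: if all earlier stages
are bounded by `B`, stage `i` is bounded by `D + x (1 + B)` with `x = s c₃ c S`, and strong
induction on `i` yields the geometric sum `(D + x) ∑_{j ≤ i} x ^ j`.
-/

open Finset

section NormBounds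

variable {ι κ E : Type*} [NormedAddCommGroup E] [NormedSpace ℝ E]

theorem norm_sum_smul_le_card_mul (t : Finset ι) {w : ι → ℝ} {v : ι → E} {C B : ℝ}
    (hw : ∀ j ∈ t, |w j| ≤ C) (hv : ∀ j ∈ t, ‖v j‖ ≤ B) :
    ‖∑ j ∈ t, w j • v j‖ ≤ t.card * (C * B) :=
  calc ‖∑ j ∈ t, w j • v j‖ ≤ ∑ _j ∈ t, C * B :=
        norm_sum_le_of_le t fun j hj => by
          rw [norm_smul, Real.norm_eq_abs]
          exact mul_le_mul (hw j hj) (hv j hj) (norm_nonneg _) ((abs_nonneg _).trans (hw j hj))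
    _ = t.card * (C * B) := by rw [sum_const, nsmul_eq_mul]

theorem norm_sum_sum_mul_smul_le [Fintype κ] (t : Finset ι) {β : ι → ℝ} (ζ : κ → ℝ)
    {v : κ → ι → E} {C B : ℝ} (hβ : ∀ j ∈ t, |β j| ≤ C) (hv : ∀ r, ∀ j ∈ t, ‖v r j‖ ≤ B) :
    ‖∑ r, ∑ j ∈ t, (β j * ζ r) • v r j‖ ≤ t.card * (C * B) * ∑ r, |ζ r| := by
  simp_rw [mul_comm (β _), mul_smul, ← smul_sum, mul_sum]
  refine (norm_sum_le _ _).trans (sum_le_sum fun r _ => ?_)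
  rw [norm_smul, Real.norm_eq_abs, mul_comm]
  exact mul_le_mul_of_nonneg_right (norm_sum_smul_le_card_mul t hβ (hv r)) (abs_nonneg _)

theorem norm_add_smul_sum_smul_le [Fintype ι] (Z : E) {h c C M : ℝ} (hh : 0 ≤ h) (hc : 0 ≤ c)
    {w : ι → ℝ} (hw : ∀ j, |w j| ≤ C) {f : ι → E → E} (hf : ∀ j x, ‖f j x‖ ≤ c * (1 + ‖x‖))
    {x : ι → E} (hx : ∀ j, ‖x j‖ ≤ M) :
    ‖Z + h • ∑ j, w j • f j (x j)‖ ≤ ‖Z‖ + Fintype.card ι * C * c * h * (1 + M) := by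
  have hsum : ‖∑ j, w j • f j (x j)‖ ≤ Fintype.card ι * (C * (c * (1 + M))) := by
    refine card_univ (α := ι) ▸ norm_sum_smul_le_card_mul univ (fun j _ => hw j) fun j _ => ?_
    exact (hf j (x j)).trans (by gcongr; exact hx j)
  calc ‖Z + h • ∑ j, w j • f j (x j)‖ ≤ ‖Z‖ + h * ‖∑ j, w j • f j (x j)‖ :=
        (norm_add_le _ _).trans_eq (by rw [norm_smul, Real.norm_of_nonneg hh])
    _ ≤ ‖Z‖ + h * (Fintype.card ι * (C * (c * (1 + M)))) := by gcongr
    _ = ‖Z‖ + Fintype.card ι * C * c * h * (1 + M) := by ring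

end NormBounds

theorem le_div_of_le_add_mul_one_add {α θ y : ℝ} (hθ : θ < 1) (hy : y ≤ α + θ * (1 + y)) :
    y ≤ (α + θ) / (1 - θ) := by
  rw [le_div_iff₀ (by linarith)]
  linarith

theorem add_mul_one_add_div_eq {α θ : ℝ} (hθ : θ ≠ 1) :
    α + θ * (1 + (α + θ) / (1 - θ)) = (α + θ) / (1 - θ) := by
  field_simp [sub_ne_zero.2 hθ.symm]
  ring

theorem le_mul_geom_sum_of_le_add_mul {s : ℕ} {κ : Type*} {n : κ → Fin s → ℝ} {D x : ℝ}
    (hD : 0 ≤ D) (hx : 0 ≤ x)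
    (hn : ∀ i B, 0 ≤ B → (∀ r, ∀ j < i, n r j ≤ B) → ∀ k, n k i ≤ D + x * B)
    (i : Fin s) (k : κ) : n k i ≤ D * ∑ j ∈ range (i + 1), x ^ j := by
  induction i using WellFoundedLT.induction generalizing k with
  | ind i ih =>
    calc n k i ≤ D + x * (D * ∑ l ∈ range i, x ^ l) :=
          hn i _ (by positivity) (fun r j hj => (ih j hj r).trans (by gcongr; exact hj)) k
      _ = D * ∑ l ∈ range (i + 1), x ^ l := by rw [geom_sum_succ]; ring

section StageBounds

variable {E : Type*} [NormedAddCommGroup E] [NormedSpace ℝ E] {c c₃ h : ℝ} {Z : E}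

theorem norm_drift_stage_le {ι : Type*} [Fintype ι] (hc : 0 ≤ c) (hh : 0 ≤ h)
    (hθ : Fintype.card ι * c₃ * c * h < 1) {A : ι → ι → ℝ} (hA : ∀ i j, |A i j| ≤ c₃)
    {f : ι → E → E} (hf : ∀ j x, ‖f j x‖ ≤ c * (1 + ‖x‖)) {H₀ : ι → E}
    (hH₀ : ∀ i, H₀ i = Z + h • ∑ j, A i j • f j (H₀ j)) (i : ι) :
    ‖H₀ i‖ ≤ (‖Z‖ + Fintype.card ι * c₃ * c * h) / (1 - Fintype.card ι * c₃ * c * h) := by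
  have : Nonempty ι := ⟨i⟩
  obtain ⟨i₀, hi₀⟩ := Finite.exists_max fun j => ‖H₀ j‖
  have hmax : ‖H₀ i₀‖ ≤ ‖Z‖ + Fintype.card ι * c₃ * c * h * (1 + ‖H₀ i₀‖) :=
    (congrArg norm (hH₀ i₀)).trans_le (norm_add_smul_sum_smul_le Z hh hc (hA i₀) hf hi₀)
  exact (hi₀ i).trans (le_div_of_le_add_mul_one_add hθ (by linarith))

theorem norm_diffusion_stage_le {s m : ℕ} (hc : 0 ≤ c) (hc₃ : 0 ≤ c₃) {D : ℝ} {Y : Fin s → E}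
    (hY : ∀ i, ‖Y i‖ ≤ D) {B₁ : Fin s → Fin s → ℝ} (hB₁ : ∀ i j, |B₁ i j| ≤ c₃)
    {g : Fin m → Fin s → E → E} (hg : ∀ r j x, ‖g r j x‖ ≤ c * (1 + ‖x‖))
    (ξ : Fin m → Fin m → ℝ) {H : Fin m → Fin s → E}
    (hH : ∀ k i, H k i = Y i + ∑ r, ∑ j ∈ univ.filter (fun j => j < i),
      (B₁ i j * ξ r k) • g r j (H r j))
    {i : Fin s} {B : ℝ} (hB : 0 ≤ B) (hHB : ∀ r, ∀ j < i, ‖H r j‖ ≤ B) (k : Fin m) :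
    ‖H k i‖ ≤ D + s * c₃ * c * (∑ r, ∑ l, |ξ r l|) * (1 + B) := by
  have hnoise := norm_sum_sum_mul_smul_le (univ.filter fun j => j < i) (fun r => ξ r k)
    (fun j _ => hB₁ i j) (B := c * (1 + B))
    fun r j hj => (hg r j _).trans (by gcongr; exact hHB r j (mem_filter.1 hj).2)
  have hcard : ((univ.filter fun j => j < i).card : ℝ) ≤ s := by
    exact_mod_cast (card_filter_le _ _).trans_eq (card_fin s)
  have hcol : ∑ r, |ξ r k| ≤ ∑ r, ∑ l, |ξ r l| :=
    sum_le_sum fun r _ => single_le_sum (f := fun l => |ξ r l|) (fun _ _ => abs_nonneg _)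
      (mem_univ k)
  rw [hH k i]
  calc _ ≤ D + (univ.filter fun j => j < i).card * (c₃ * (c * (1 + B))) * ∑ r, |ξ r k| :=
        (norm_add_le _ _).trans (add_le_add (hY i) hnoise)
    _ ≤ D + s * (c₃ * (c * (1 + B))) * ∑ r, ∑ l, |ξ r l| := by gcongr
    _ = D + s * c₃ * c * (∑ r, ∑ l, |ξ r l|) * (1 + B) := by ring

end StageBounds

theorem stmt_16_general (s d m : ℕ) (hs : 0 < s)
    (c c₃ : ℝ) (hc : 0 < c) (hc₃ : 0 < c₃)
    (a : ℝ → EuclideanSpace ℝ (Fin d) → EuclideanSpace ℝ (Fin d))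
    (ha : ∀ t x, ‖a t x‖ ≤ c * (1 + ‖x‖))
    (b : Fin m → ℝ → EuclideanSpace ℝ (Fin d) → EuclideanSpace ℝ (Fin d))
    (hb : ∀ k t x, ‖b k t x‖ ≤ c * (1 + ‖x‖))
    (A0 A1 B1 : Fin s → Fin s → ℝ)
    (hA0 : ∀ i j, |A0 i j| ≤ c₃) (hA1 : ∀ i j, |A1 i j| ≤ c₃) (hB1 : ∀ i j, |B1 i j| ≤ c₃)
    (c0 c1 : Fin s → ℝ)
    (h : ℝ) (hh : 0 < h) (hh' : h < 1 / ((s : ℝ) * c * c₃))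
    (t : ℝ) (Z : EuclideanSpace ℝ (Fin d))
    (ξ : Fin m → Fin m → ℝ)
    (H0 : Fin s → EuclideanSpace ℝ (Fin d))
    (hH0 : ∀ i, H0 i = Z + h • ∑ j, A0 i j • a (t + c0 j * h) (H0 j))
    (H : Fin m → Fin s → EuclideanSpace ℝ (Fin d))
    (hH : ∀ k i, H k i = Z + h • (∑ j, A1 i j • a (t + c0 j * h) (H0 j))
      + ∑ r, ∑ j ∈ Finset.univ.filter (fun j => j < i),
          (B1 i j * ξ r k) • b r (t + c1 j * h) (H r j)) :
    ∀ i k, ‖H k i‖ ≤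
      ((‖Z‖ + (s : ℝ) * c₃ * c * h) / (1 - (s : ℝ) * c₃ * c * h)
          + (s : ℝ) * c₃ * c * ∑ r, ∑ l, |ξ r l|)
        * ∑ j ∈ Finset.range ((i : ℕ) + 1),
            (c₃ * c * (s : ℝ)) ^ j * (∑ r, ∑ l, |ξ r l|) ^ j := by
  intro i k
  set θ := (s : ℝ) * c₃ * c * h
  set D := (‖Z‖ + θ) / (1 - θ)
  have hθ : θ < 1 := by
    have := (lt_div_iff₀ (by positivity)).1 hh'
    linarith
  have hD : 0 ≤ D := div_nonneg (by positivity) (by linarith)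
  have hdrift : ∀ j, ‖H0 j‖ ≤ D := by
    simpa only [Fintype.card_fin] using norm_drift_stage_le hc.le hh.le
      (by simpa only [Fintype.card_fin] using hθ) hA0 (fun j => ha (t + c0 j * h)) hH0
  have hexplicit : ∀ i, ‖Z + h • ∑ j, A1 i j • a (t + c0 j * h) (H0 j)‖ ≤ D := fun i =>
    (norm_add_smul_sum_smul_le Z hh.le hc.le (hA1 i) (fun j => ha (t + c0 j * h)) hdrift).trans_eq
      (by rw [Fintype.card_fin]; exact add_mul_one_add_div_eq hθ.ne)
  have hstage : ∀ i B, 0 ≤ B → (∀ r, ∀ j < i, ‖H r j‖ ≤ B) → ∀ k, ‖H k i‖ ≤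
      (D + s * c₃ * c * ∑ r, ∑ l, |ξ r l|) + c₃ * c * s * (∑ r, ∑ l, |ξ r l|) * B :=
    fun i B hB hHB k => (norm_diffusion_stage_le hc.le hc₃.le hexplicit hB1
      (g := fun r j => b r (t + c1 j * h)) (fun r j => hb r _) ξ hH hB hHB k).trans_eq (by ring)
  refine (le_mul_geom_sum_of_le_add_mul (n := fun k i => ‖H k i‖) (by positivity) (by positivity)
    hstage i k).trans_eq ?_
  simp only [mul_pow]

/-- Estimate (45): bound on the diffusion stages of the SRK method. -/
theorem stmt_16 (s d m : ℕ) (hs : 0 < s) (hd : 0 < d) (hm : 0 < m)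
    (c c₃ : ℝ) (hc : 0 < c) (hc₃ : 0 < c₃)
    (a : ℝ → EuclideanSpace ℝ (Fin d) → EuclideanSpace ℝ (Fin d))
    (ha : ∀ t x, ‖a t x‖ ≤ c * (1 + ‖x‖))
    (b : Fin m → ℝ → EuclideanSpace ℝ (Fin d) → EuclideanSpace ℝ (Fin d))
    (hb : ∀ k t x, ‖b k t x‖ ≤ c * (1 + ‖x‖))
    (A0 A1 B1 : Fin s → Fin s → ℝ)
    (hA0 : ∀ i j, |A0 i j| ≤ c₃) (hA1 : ∀ i j, |A1 i j| ≤ c₃) (hB1 : ∀ i j, |B1 i j| ≤ c₃)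
    (hB1tri : ∀ i j, i ≤ j → B1 i j = 0)
    (c0 c1 : Fin s → ℝ) (hc0 : ∀ j, |c0 j| ≤ c₃) (hc1 : ∀ j, |c1 j| ≤ c₃)
    (h : ℝ) (hh : 0 < h) (hh' : h < 1 / ((s : ℝ) * c * c₃))
    (t : ℝ) (Z : EuclideanSpace ℝ (Fin d))
    (ξ : Fin m → Fin m → ℝ)
    (H0 : Fin s → EuclideanSpace ℝ (Fin d))
    (hH0 : ∀ i, H0 i = Z + h • ∑ j, A0 i j • a (t + c0 j * h) (H0 j))
    (H : Fin m → Fin s → EuclideanSpace ℝ (Fin d))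
    (hH : ∀ k i, H k i = Z + h • (∑ j, A1 i j • a (t + c0 j * h) (H0 j))
      + ∑ r, ∑ j ∈ Finset.univ.filter (fun j => j < i),
          (B1 i j * ξ r k) • b r (t + c1 j * h) (H r j)) :
    ∀ i k, ‖H k i‖ ≤
      ((‖Z‖ + (s : ℝ) * c₃ * c * h) / (1 - (s : ℝ) * c₃ * c * h)
          + (s : ℝ) * c₃ * c * ∑ r, ∑ l, |ξ r l|)
        * ∑ j ∈ Finset.range ((i : ℕ) + 1),
            (c₃ * c * (s : ℝ)) ^ j * (∑ r, ∑ l, |ξ r l|) ^ j :=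
  stmt_16_general s d m hs c c₃ hc hc₃ a ha b hb A0 A1 B1 hA0 hA1 hB1 c0 c1 h hh hh' t Z ξ H0 hH0 H
    hH
end
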